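/- arXiv:1904.06919 — 4 statements merged into one kernel-verified Lean document; each statement's English description precedes it below -/
import Mathlib

section
/- Let 𝒯_horn be the ALC-TBox consisting of the concept inclusions E ⊑ A₁ ⊔ A₂ ⊔ ∃R.(¬B₁ ⊓ ¬B₂), ∃R.(B₁ ⊓ B₂) ⊑ ⊥, E ⊑ ∃R.⊤, ∃R.B₁ ⊑ ∃R.B₂, and ∃R.B₂ ⊑ ∃R.B₁. Then: (a) 𝒯_horn is equivalent to a Horn first-order sentence (there is a Horn sentence ψ such that for every τ-structure 𝔄: 𝔄 ⊨ ψ iff every CI in 𝒯_horn holds in 𝔄); and (b) 𝒯_horn is not equivalent to any hornALC-TBox, i.e., there is no hornALC-TBox with exactly the same models as 𝒯_horn. -/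
/-- A τ-structure over domain `D`, for a vocabulary with concept names `Con`
(unary predicates) and role names `Rol` (binary predicates). -/
structure Str (Con Rol : Type) (D : Type) where
  conI : Con → Set D
  rolI : Rol → Set (D × D)

/-- ALC-concepts over the vocabulary `(Con, Rol)`. -/
inductive ALC (Con Rol : Type) where
  | top : ALC Con Rol
  | bot : ALC Con Rol
  | atomic : Con → ALC Con Rol
  | neg : ALC Con Rol → ALC Con Rol
  | disj : ALC Con Rol → ALC Con Rol → ALC Con Rol
  | conj : ALC Con Rol → ALC Con Rol → ALC Con Rol
  | impl : ALC Con Rol → ALC Con Rol → ALC Con Rol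
  | ex : Rol → ALC Con Rol → ALC Con Rol
  | all : Rol → ALC Con Rol → ALC Con Rol

variable {Con Rol D D1 D2 : Type}

/-- The extension `C^𝔄` of an ALC-concept in a structure. -/
def ALC.sem (M : Str Con Rol D) : ALC Con Rol → Set D
  | .top => Set.univ
  | .bot => ∅
  | .atomic A => M.conI A
  | .neg C => (C.sem M)ᶜ
  | .disj C C' => C.sem M ∪ C'.sem M
  | .conj C C' => C.sem M ∩ C'.sem M
  | .impl C C' => (C.sem M)ᶜ ∪ C'.sem M
  | .ex R C => {a | ∃ b, (a, b) ∈ M.rolI R ∧ b ∈ C.sem M}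
  | .all R C => {a | ∀ b, (a, b) ∈ M.rolI R → b ∈ C.sem M}

/-- The depth of an ALC-concept: maximal nesting of `∃R` and `∀R`. -/
def ALC.depth : ALC Con Rol → ℕ
  | .top | .bot | .atomic _ => 0
  | .neg C => C.depth
  | .disj C C' | .conj C C' | .impl C C' => max C.depth C'.depth
  | .ex _ C | .all _ C => C.depth + 1

/-- ELU-concepts: built from concept names and ⊤ using ⊓, ⊔ and ∃R only. -/
inductive ALC.IsELU : ALC Con Rol → Prop
  | top : IsELU .top
  | atomic (A : Con) : IsELU (.atomic A)
  | conj {C C' : ALC Con Rol} : IsELU C → IsELU C' → IsELU (.conj C C')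
  | disj {C C' : ALC Con Rol} : IsELU C → IsELU C' → IsELU (.disj C C')
  | ex (R : Rol) {C : ALC Con Rol} : IsELU C → IsELU (.ex R C)

/-- hornALC-concepts: `H ::= ⊥ | ⊤ | A | H⊓H' | L→H | ∃R.H | ∀R.H` with `L` an ELU-concept. -/
inductive ALC.IsHorn : ALC Con Rol → Prop
  | bot : IsHorn .bot
  | top : IsHorn .top
  | atomic (A : Con) : IsHorn (.atomic A)
  | conj {H H' : ALC Con Rol} : IsHorn H → IsHorn H' → IsHorn (.conj H H')
  | impl {L H : ALC Con Rol} : IsELU L → IsHorn H → IsHorn (.impl L H)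
  | ex (R : Rol) {H : ALC Con Rol} : IsHorn H → IsHorn (.ex R H)
  | all (R : Rol) {H : ALC Con Rol} : IsHorn H → IsHorn (.all R H)

/-- `S` is a simulation between `M` and `N`. -/
def IsSim (M : Str Con Rol D1) (N : Str Con Rol D2) (S : Set (D1 × D2)) : Prop :=
  ∀ a b, (a, b) ∈ S →
    (∀ A, a ∈ M.conI A → b ∈ N.conI A) ∧
    (∀ R a', (a, a') ∈ M.rolI R → ∃ b', (b, b') ∈ N.rolI R ∧ (a', b') ∈ S)

/-- `𝔄,a ⪯_sim 𝔅,b`: some simulation contains `(a,b)`. -/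
def Sim (M : Str Con Rol D1) (N : Str Con Rol D2) (a : D1) (b : D2) : Prop :=
  ∃ S, IsSim M N S ∧ (a, b) ∈ S

/-- The ℓ-round simulation relations `⪯^ℓ_sim`. -/
def SimL (M : Str Con Rol D1) (N : Str Con Rol D2) : ℕ → D1 → D2 → Prop
  | 0 => fun a b => ∀ A, a ∈ M.conI A → b ∈ N.conI A
  | ℓ + 1 => fun a b =>
      (∀ A, a ∈ M.conI A → b ∈ N.conI A) ∧
      ∀ R a', (a, a') ∈ M.rolI R → ∃ b', (b, b') ∈ N.rolI R ∧ SimL M N ℓ a' b'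

/-- `X R↑ Y`. -/
def relUp (R : Set (D1 × D1)) (X Y : Set D1) : Prop := ∀ a ∈ X, ∃ b ∈ Y, (a, b) ∈ R

/-- `X R↓ Y`. -/
def relDown (R : Set (D1 × D1)) (X Y : Set D1) : Prop := ∀ b ∈ Y, ∃ a ∈ X, (a, b) ∈ R

/-- `Z` is a Horn simulation between `M` and `N`. -/
def IsHornSim (M : Str Con Rol D1) (N : Str Con Rol D2) (Z : Set (Set D1 × D2)) : Prop :=
  ∀ X b, (X, b) ∈ Z →
    X.Nonempty ∧
    (∀ A, X ⊆ M.conI A → b ∈ N.conI A) ∧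
    (∀ R Y, relUp (M.rolI R) X Y →
        ∃ Y', Y' ⊆ Y ∧ ∃ b', (b, b') ∈ N.rolI R ∧ (Y', b') ∈ Z) ∧
    (∀ R b', (b, b') ∈ N.rolI R → ∃ Y, relDown (M.rolI R) X Y ∧ (Y, b') ∈ Z) ∧
    (∀ a ∈ X, Sim N M b a)

/-- `𝔄,X ⪯_horn 𝔅,b`: some Horn simulation contains `(X,b)`. -/
def HornSim (M : Str Con Rol D1) (N : Str Con Rol D2) (X : Set D1) (b : D2) : Prop :=
  ∃ Z, IsHornSim M N Z ∧ (X, b) ∈ Z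

/-- The ℓ-round Horn simulation relations `⪯^ℓ_horn`. -/
def HornSimL (M : Str Con Rol D1) (N : Str Con Rol D2) : ℕ → Set D1 → D2 → Prop
  | 0 => fun X b =>
      X.Nonempty ∧ (∀ A, X ⊆ M.conI A → b ∈ N.conI A) ∧ ∀ a ∈ X, SimL N M 0 b a
  | ℓ + 1 => fun X b =>
      (X.Nonempty ∧ (∀ A, X ⊆ M.conI A → b ∈ N.conI A) ∧ ∀ a ∈ X, SimL N M 0 b a) ∧
      (∀ R Y, relUp (M.rolI R) X Y →
          ∃ Y', Y' ⊆ Y ∧ ∃ b', (b, b') ∈ N.rolI R ∧ HornSimL M N ℓ Y' b') ∧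
      (∀ R b', (b, b') ∈ N.rolI R → ∃ Y, relDown (M.rolI R) X Y ∧ HornSimL M N ℓ Y b') ∧
      (∀ a ∈ X, SimL N M (ℓ + 1) b a)

/-- `𝔄,X ≤^ℓ_hornALC 𝔅,b`. -/
def leHornDepth (M : Str Con Rol D1) (N : Str Con Rol D2) (ℓ : ℕ) (X : Set D1) (b : D2) : Prop :=
  ∀ C : ALC Con Rol, C.IsHorn → C.depth ≤ ℓ → X ⊆ C.sem M → b ∈ C.sem N

/-- `𝔄,X ≤_hornALC 𝔅,b`. -/
def leHorn (M : Str Con Rol D1) (N : Str Con Rol D2) (X : Set D1) (b : D2) : Prop :=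
  ∀ C : ALC Con Rol, C.IsHorn → X ⊆ C.sem M → b ∈ C.sem N

/-- `𝔄,a ≤^ℓ_ELU 𝔅,b`. -/
def leELUDepth (M : Str Con Rol D1) (N : Str Con Rol D2) (ℓ : ℕ) (a : D1) (b : D2) : Prop :=
  ∀ C : ALC Con Rol, C.IsELU → C.depth ≤ ℓ → a ∈ C.sem M → b ∈ C.sem N

/-- `𝔄,a ≤_ELU 𝔅,b`. -/
def leELU (M : Str Con Rol D1) (N : Str Con Rol D2) (a : D1) (b : D2) : Prop :=
  ∀ C : ALC Con Rol, C.IsELU → a ∈ C.sem M → b ∈ C.sem N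

/-- First-order formulas over the vocabulary `(Con, Rol)` (with equality), using
natural numbers as variables. -/
inductive FO (Con Rol : Type) where
  | eq : ℕ → ℕ → FO Con Rol
  | catom : Con → ℕ → FO Con Rol
  | ratom : Rol → ℕ → ℕ → FO Con Rol
  | not : FO Con Rol → FO Con Rol
  | and : FO Con Rol → FO Con Rol → FO Con Rol
  | or : FO Con Rol → FO Con Rol → FO Con Rol
  | imp : FO Con Rol → FO Con Rol → FO Con Rol
  | ex : ℕ → FO Con Rol → FO Con Rol
  | all : ℕ → FO Con Rol → FO Con Rol

/-- Satisfaction of a first-order formula in a structure under a valuation. -/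
def FO.sem (M : Str Con Rol D) : FO Con Rol → (ℕ → D) → Prop
  | .eq x y, v => v x = v y
  | .catom A x, v => v x ∈ M.conI A
  | .ratom R x y, v => (v x, v y) ∈ M.rolI R
  | .not φ, v => ¬ φ.sem M v
  | .and φ ψ, v => φ.sem M v ∧ ψ.sem M v
  | .or φ ψ, v => φ.sem M v ∨ ψ.sem M v
  | .imp φ ψ, v => φ.sem M v → ψ.sem M v
  | .ex n φ, v => ∃ d : D, φ.sem M (Function.update v n d)
  | .all n φ, v => ∀ d : D, φ.sem M (Function.update v n d)

/-- Atomic first-order formulas. -/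
inductive FO.IsAtom : FO Con Rol → Prop
  | eq (x y : ℕ) : IsAtom (.eq x y)
  | catom (A : Con) (x : ℕ) : IsAtom (.catom A x)
  | ratom (R : Rol) (x y : ℕ) : IsAtom (.ratom R x y)

/-- Disjunctions of negations of atoms. -/
inductive FO.IsNegClause : FO Con Rol → Prop
  | neg {φ : FO Con Rol} : IsAtom φ → IsNegClause (.not φ)
  | or {φ ψ : FO Con Rol} : IsNegClause φ → IsNegClause ψ → IsNegClause (.or φ ψ)

/-- Basic Horn formulas: disjunctions of formulas at most one of which is an atom,
the remaining ones being negations of atoms. -/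
inductive FO.IsBasicHorn : FO Con Rol → Prop
  | pos {φ : FO Con Rol} : IsAtom φ → IsBasicHorn φ
  | neg {φ : FO Con Rol} : IsNegClause φ → IsBasicHorn φ
  | orL {φ ψ : FO Con Rol} : IsNegClause φ → IsBasicHorn ψ → IsBasicHorn (.or φ ψ)
  | orR {φ ψ : FO Con Rol} : IsBasicHorn φ → IsNegClause ψ → IsBasicHorn (.or φ ψ)

/-- Horn formulas: constructed from basic Horn formulas using ∧, ∃ and ∀. -/
inductive FO.IsHorn : FO Con Rol → Prop
  | basic {φ : FO Con Rol} : IsBasicHorn φ → IsHorn φ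
  | and {φ ψ : FO Con Rol} : IsHorn φ → IsHorn ψ → IsHorn (.and φ ψ)
  | ex (n : ℕ) {φ : FO Con Rol} : IsHorn φ → IsHorn (.ex n φ)
  | all (n : ℕ) {φ : FO Con Rol} : IsHorn φ → IsHorn (.all n φ)

/-- A structure is a model of a TBox (a finite list of concept inclusions) if every
inclusion in it holds. -/
def modelsTBox (M : Str Con Rol D) (T : List (ALC Con Rol × ALC Con Rol)) : Prop :=
  ∀ p ∈ T, (p.1 : ALC Con Rol).sem M ⊆ (p.2 : ALC Con Rol).sem M

/-- A hornALC-TBox: a finite list of CIs `L ⊑ H` with `L` an ELU-concept and `H` a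
hornALC-concept. -/
def IsHornTBox (T : List (ALC Con Rol × ALC Con Rol)) : Prop :=
  ∀ p ∈ T, (p.1 : ALC Con Rol).IsELU ∧ (p.2 : ALC Con Rol).IsHorn

/-- The TBox `𝒯_horn` with CIs `E ⊑ A₁ ⊔ A₂ ⊔ ∃R.(¬B₁ ⊓ ¬B₂)`, `∃R.(B₁ ⊓ B₂) ⊑ ⊥`,
`E ⊑ ∃R.⊤`, `∃R.B₁ ⊑ ∃R.B₂`, `∃R.B₂ ⊑ ∃R.B₁`. -/
def Thorn {Con Rol : Type} (E A1 A2 B1 B2 : Con) (R : Rol) :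
    List (ALC Con Rol × ALC Con Rol) :=
  [ (.atomic E, .disj (.atomic A1) (.disj (.atomic A2)
        (.ex R (.conj (.neg (.atomic B1)) (.neg (.atomic B2)))))),
    (.ex R (.conj (.atomic B1) (.atomic B2)), .bot),
    (.atomic E, .ex R .top),
    (.ex R (.atomic B1), .ex R (.atomic B2)),
    (.ex R (.atomic B2), .ex R (.atomic B1)) ]


namespace Scratch
variable {Con Rol D D1 D2 : Type}

/-- Characterization of models of `Thorn`. -/
lemma models_thorn_iff (E A1 A2 B1 B2 : Con) (R : Rol) (M : Str Con Rol D) :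
    modelsTBox M (Thorn E A1 A2 B1 B2 R) ↔
    ((∀ x, x ∈ M.conI E → x ∈ M.conI A1 ∨ x ∈ M.conI A2 ∨
        ∃ y, (x, y) ∈ M.rolI R ∧ y ∉ M.conI B1 ∧ y ∉ M.conI B2) ∧
     (∀ x y, (x, y) ∈ M.rolI R → ¬(y ∈ M.conI B1 ∧ y ∈ M.conI B2)) ∧
     (∀ x, x ∈ M.conI E → ∃ y, (x, y) ∈ M.rolI R) ∧
     (∀ x y, (x, y) ∈ M.rolI R → y ∈ M.conI B1 →
        ∃ z, (x, z) ∈ M.rolI R ∧ z ∈ M.conI B2) ∧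
     (∀ x y, (x, y) ∈ M.rolI R → y ∈ M.conI B2 →
        ∃ z, (x, z) ∈ M.rolI R ∧ z ∈ M.conI B1)) := by
  constructor
  · intro h
    have h1 := h (ALC.atomic E, .disj (.atomic A1) (.disj (.atomic A2) (.ex R (.conj (.neg (.atomic B1)) (.neg (.atomic B2)))))) (by simp [Thorn])
    have h2 := h (ALC.ex R (.conj (.atomic B1) (.atomic B2)), .bot) (by simp [Thorn])
    have h3 := h (ALC.atomic E, .ex R .top) (by simp [Thorn])
    have h4 := h (ALC.ex R (.atomic B1), .ex R (.atomic B2)) (by simp [Thorn])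
    have h5 := h (ALC.ex R (.atomic B2), .ex R (.atomic B1)) (by simp [Thorn])
    simp only [ALC.sem, Set.subset_def, Set.mem_union, Set.mem_setOf_eq, Set.mem_compl_iff,
      Set.mem_inter_iff, Set.mem_empty_iff_false, Set.mem_univ] at h1 h2 h3 h4 h5
    refine ⟨fun x hx => ?_, fun x y hxy hy => ?_, fun x hx => ?_,
      fun x y hxy hy => ?_, fun x y hxy hy => ?_⟩
    · have := h1 x hx; tauto
    · exact h2 x ⟨y, hxy, hy.1, hy.2⟩
    · obtain ⟨y, hy, -⟩ := h3 x hx; exact ⟨y, hy⟩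
    · exact h4 x ⟨y, hxy, hy⟩
    · exact h5 x ⟨y, hxy, hy⟩
  · rintro ⟨h1, h2, h3, h4, h5⟩ p hp
    simp only [Thorn, List.mem_cons, List.not_mem_nil, or_false] at hp
    rcases hp with rfl | rfl | rfl | rfl | rfl <;>
      simp only [ALC.sem, Set.subset_def, Set.mem_union, Set.mem_setOf_eq, Set.mem_compl_iff,
        Set.mem_inter_iff, Set.mem_empty_iff_false, Set.mem_univ]
    · intro x hx
      rcases h1 x hx with h | h | ⟨y, hy, hb1, hb2⟩
      · exact Or.inl h
      · exact Or.inr (Or.inl h)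
      · exact Or.inr (Or.inr ⟨y, hy, hb1, hb2⟩)
    · rintro x ⟨y, hxy, hb1, hb2⟩
      exact h2 x y hxy ⟨hb1, hb2⟩
    · intro x hx
      obtain ⟨y, hy⟩ := h3 x hx
      exact ⟨y, hy, trivial⟩
    · rintro x ⟨y, hxy, hy⟩
      exact h4 x y hxy hy
    · rintro x ⟨y, hxy, hy⟩
      exact h5 x y hxy hy
end Scratch

namespace Scratch2
variable {Con Rol D D1 D2 : Type}

/-- `∀x∀y (¬R(x,y) ∨ ¬B1(y) ∨ ¬B2(y))` -/
def psi1 (B1 B2 : Con) (R : Rol) : FO Con Rol :=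
  .all 0 (.all 1 (.or (.not (.ratom R 0 1)) (.or (.not (.catom B1 1)) (.not (.catom B2 1)))))

/-- `∀x∀y∃z ((¬R(x,y)∨¬B(y)∨R(x,z)) ∧ (¬R(x,y)∨¬B(y)∨B'(z)))` -/
def psi2 (B B' : Con) (R : Rol) : FO Con Rol :=
  .all 0 (.all 1 (.ex 2 (.and
    (.or (.not (.ratom R 0 1)) (.or (.not (.catom B 1)) (.ratom R 0 2)))
    (.or (.not (.ratom R 0 1)) (.or (.not (.catom B 1)) (.catom B' 2))))))

/-- `∀x∃y ((¬E(x)∨R(x,y)) ∧ (¬E(x)∨¬B1(y)∨A1(x)) ∧ (¬E(x)∨¬B2(y)∨A2(x)))` -/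
def psi4 (E A1 A2 B1 B2 : Con) (R : Rol) : FO Con Rol :=
  .all 0 (.ex 1 (.and
    (.or (.not (.catom E 0)) (.ratom R 0 1))
    (.and
      (.or (.not (.catom E 0)) (.or (.not (.catom B1 1)) (.catom A1 0)))
      (.or (.not (.catom E 0)) (.or (.not (.catom B2 1)) (.catom A2 0))))))

def psi (E A1 A2 B1 B2 : Con) (R : Rol) : FO Con Rol :=
  .and (psi1 B1 B2 R) (.and (psi2 B1 B2 R) (.and (psi2 B2 B1 R) (psi4 E A1 A2 B1 B2 R)))

lemma psi_horn (E A1 A2 B1 B2 : Con) (R : Rol) : (psi E A1 A2 B1 B2 R).IsHorn := by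
  refine .and ?_ (.and ?_ (.and ?_ ?_))
  · exact .all 0 (.all 1 (.basic (.neg (.or (.neg (.ratom R 0 1))
      (.or (.neg (.catom B1 1)) (.neg (.catom B2 1)))))))
  · exact .all 0 (.all 1 (.ex 2 (.and
      (.basic (.orL (.neg (.ratom R 0 1)) (.orL (.neg (.catom B1 1)) (.pos (.ratom R 0 2)))))
      (.basic (.orL (.neg (.ratom R 0 1)) (.orL (.neg (.catom B1 1)) (.pos (.catom B2 2))))))))
  · exact .all 0 (.all 1 (.ex 2 (.and
      (.basic (.orL (.neg (.ratom R 0 1)) (.orL (.neg (.catom B2 1)) (.pos (.ratom R 0 2)))))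
      (.basic (.orL (.neg (.ratom R 0 1)) (.orL (.neg (.catom B2 1)) (.pos (.catom B1 2))))))))
  · exact .all 0 (.ex 1 (.and
      (.basic (.orL (.neg (.catom E 0)) (.pos (.ratom R 0 1))))
      (.and
        (.basic (.orL (.neg (.catom E 0)) (.orL (.neg (.catom B1 1)) (.pos (.catom A1 0)))))
        (.basic (.orL (.neg (.catom E 0)) (.orL (.neg (.catom B2 1)) (.pos (.catom A2 0))))))))

lemma psi_iff (E A1 A2 B1 B2 : Con) (R : Rol) (M : Str Con Rol D) [Nonempty D] (v : ℕ → D) :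
    (psi E A1 A2 B1 B2 R).sem M v ↔ modelsTBox M (Thorn E A1 A2 B1 B2 R) := by
  rw [Scratch.models_thorn_iff]
  simp only [psi, psi1, psi2, psi4, FO.sem, Function.update]
  norm_num
  constructor
  · rintro ⟨p1, p2, p3, p4⟩
    have c2 : ∀ x y, (x, y) ∈ M.rolI R → y ∈ M.conI B1 → y ∉ M.conI B2 := by
      intro x y hxy h1 h2
      rcases p1 x y with h | h | h <;> tauto
    have c4 : ∀ x y, (x, y) ∈ M.rolI R → y ∈ M.conI B1 →
        ∃ z, (x, z) ∈ M.rolI R ∧ z ∈ M.conI B2 := by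
      intro x y hxy hy
      obtain ⟨z, hz1, hz2⟩ := p2 x y
      exact ⟨z, by tauto, by tauto⟩
    have c5 : ∀ x y, (x, y) ∈ M.rolI R → y ∈ M.conI B2 →
        ∃ z, (x, z) ∈ M.rolI R ∧ z ∈ M.conI B1 := by
      intro x y hxy hy
      obtain ⟨z, hz1, hz2⟩ := p3 x y
      exact ⟨z, by tauto, by tauto⟩
    refine ⟨?_, c2, ?_, c4, c5⟩
    · intro x hx
      obtain ⟨y, hy1, hy2, hy3⟩ := p4 x
      have hR : (x, y) ∈ M.rolI R := by tauto
      by_cases hB1 : y ∈ M.conI B1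
      · exact Or.inl (by tauto)
      · by_cases hB2 : y ∈ M.conI B2
        · exact Or.inr (Or.inl (by tauto))
        · exact Or.inr (Or.inr ⟨y, hR, hB1, hB2⟩)
    · intro x hx
      obtain ⟨y, hy1, -, -⟩ := p4 x
      exact ⟨y, by tauto⟩
  · rintro ⟨c1, c2, c3, c4, c5⟩
    refine ⟨?_, ?_, ?_, ?_⟩
    · intro x y
      by_cases h : (x, y) ∈ M.rolI R
      · have := c2 x y h; tauto
      · tauto
    · intro x y
      by_cases h : (x, y) ∈ M.rolI R ∧ y ∈ M.conI B1
      · obtain ⟨z, hz1, hz2⟩ := c4 x y h.1 h.2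
        refine ⟨z, ?_, ?_⟩ <;> tauto
      · exact ⟨y, by tauto, by tauto⟩
    · intro x y
      by_cases h : (x, y) ∈ M.rolI R ∧ y ∈ M.conI B2
      · obtain ⟨z, hz1, hz2⟩ := c5 x y h.1 h.2
        refine ⟨z, ?_, ?_⟩ <;> tauto
      · exact ⟨y, by tauto, by tauto⟩
    · intro x
      by_cases hE : x ∈ M.conI E
      · -- need a good witness y
        rcases c1 x hE with hA1 | hA2 | ⟨y, hy, hb1, hb2⟩
        · -- A1(x) holds; need succ y with (B2(y) → A2(x))
          by_cases hA2 : x ∈ M.conI A2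
          · obtain ⟨y, hy⟩ := c3 x hE
            exact ⟨y, by tauto, by tauto, by tauto⟩
          · by_cases hout : ∃ y, (x, y) ∈ M.rolI R ∧ y ∉ M.conI B2
            · obtain ⟨y, hy1, hy2⟩ := hout
              exact ⟨y, by tauto, by tauto, by tauto⟩
            · push_neg at hout
              exfalso
              obtain ⟨y, hy⟩ := c3 x hE
              obtain ⟨z, hz1, hz2⟩ := c5 x y hy (hout y hy)
              exact c2 x z hz1 hz2 (hout z hz1)
        · by_cases hA1 : x ∈ M.conI A1
          · obtain ⟨y, hy⟩ := c3 x hE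
            exact ⟨y, by tauto, by tauto, by tauto⟩
          · by_cases hout : ∃ y, (x, y) ∈ M.rolI R ∧ y ∉ M.conI B1
            · obtain ⟨y, hy1, hy2⟩ := hout
              exact ⟨y, by tauto, by tauto, by tauto⟩
            · push_neg at hout
              exfalso
              obtain ⟨y, hy⟩ := c3 x hE
              obtain ⟨z, hz1, hz2⟩ := c4 x y hy (hout y hy)
              exact c2 x z hz1 (hout z hz1) hz2
        · exact ⟨y, by tauto, by tauto, by tauto⟩
      · obtain ⟨y⟩ : Nonempty D := inferInstance
        exact ⟨y, by tauto, by tauto, by tauto⟩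
end Scratch2

namespace Scratch3
variable {Con Rol D : Type}

lemma elu_mono {M N : Str Con Rol D}
    (hc : ∀ A, M.conI A ⊆ N.conI A) (hr : ∀ S, M.rolI S ⊆ N.rolI S)
    {C : ALC Con Rol} (h : C.IsELU) : C.sem M ⊆ C.sem N := by
  induction h with
  | top => exact le_rfl
  | atomic A => exact hc A
  | conj h1 h2 ih1 ih2 => exact Set.inter_subset_inter ih1 ih2
  | disj h1 h2 ih1 ih2 => exact Set.union_subset_union ih1 ih2
  | ex S h ih =>
    rintro x ⟨y, hy1, hy2⟩
    exact ⟨y, hr _ hy1, ih hy2⟩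

lemma sem_agree (M N : Str Con Rol D) (hrol : M.rolI = N.rolI) (W : Set D)
    (hW : ∀ x ∈ W, ∀ A, x ∈ M.conI A ↔ x ∈ N.conI A)
    (hcl : ∀ x ∈ W, ∀ S y, (x, y) ∈ M.rolI S → y ∈ W) :
    ∀ C : ALC Con Rol, ∀ x ∈ W, (x ∈ C.sem M ↔ x ∈ C.sem N) := by
  intro C
  induction C with
  | top => simp [ALC.sem]
  | bot => simp [ALC.sem]
  | atomic A => exact fun x hx => hW x hx A
  | neg C ih => intro x hx; simp only [ALC.sem, Set.mem_compl_iff]; rw [ih x hx]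
  | disj C C' ih ih' =>
    intro x hx; simp only [ALC.sem, Set.mem_union]; rw [ih x hx, ih' x hx]
  | conj C C' ih ih' =>
    intro x hx; simp only [ALC.sem, Set.mem_inter_iff]; rw [ih x hx, ih' x hx]
  | impl C C' ih ih' =>
    intro x hx
    simp only [ALC.sem, Set.mem_union, Set.mem_compl_iff]; rw [ih x hx, ih' x hx]
  | ex S C ih =>
    intro x hx
    simp only [ALC.sem, Set.mem_setOf_eq]
    constructor
    · rintro ⟨y, hy1, hy2⟩
      exact ⟨y, hrol ▸ hy1, (ih y (hcl x hx S y hy1)).1 hy2⟩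
    · rintro ⟨y, hy1, hy2⟩
      have hy1' : (x, y) ∈ M.rolI S := hrol ▸ hy1
      exact ⟨y, hy1', (ih y (hcl x hx S y hy1')).2 hy2⟩
  | all S C ih =>
    intro x hx
    simp only [ALC.sem, Set.mem_setOf_eq]
    constructor
    · intro h y hy
      have hy' : (x, y) ∈ M.rolI S := hrol ▸ hy
      exact (ih y (hcl x hx S y hy')).1 (h y hy')
    · intro h y hy
      exact (ih y (hcl x hx S y hy)).2 (h y (hrol ▸ hy))

lemma horn_inter (M1 M2 N : Str Con Rol D)
    (hr1 : M1.rolI = N.rolI) (hr2 : M2.rolI = N.rolI)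
    (hc : ∀ A, N.conI A = M1.conI A ∩ M2.conI A)
    (W : Set D)
    (hW1 : ∀ x ∈ W, ∀ A, (x ∈ M1.conI A ↔ x ∈ N.conI A))
    (hsucc : ∀ S (x y : D), (x, y) ∈ N.rolI S → y ∈ W)
    {H : ALC Con Rol} (hH : H.IsHorn) :
    H.sem M1 ∩ H.sem M2 ⊆ H.sem N := by
  have hagree := sem_agree M1 N hr1 W hW1
    (fun x _ S y hy => hsucc S x y (hr1 ▸ hy))
  have hmono1 : ∀ A, N.conI A ⊆ M1.conI A := fun A => (hc A) ▸ Set.inter_subset_left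
  have hmono2 : ∀ A, N.conI A ⊆ M2.conI A := fun A => (hc A) ▸ Set.inter_subset_right
  induction hH with
  | bot => simp [ALC.sem]
  | top => simp [ALC.sem]
  | atomic A =>
    intro x hx
    show x ∈ N.conI A
    rw [hc A]; exact hx
  | conj h1 h2 ih1 ih2 =>
    rintro x ⟨⟨a1, b1⟩, ⟨a2, b2⟩⟩
    exact ⟨ih1 ⟨a1, a2⟩, ih2 ⟨b1, b2⟩⟩
  | @impl L H hL hH ih =>
    rintro x ⟨h1, h2⟩
    simp only [ALC.sem, Set.mem_union, Set.mem_compl_iff] at h1 h2 ⊢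
    by_cases hxL : x ∈ L.sem N
    · have hx1 : x ∈ L.sem M1 :=
        elu_mono hmono1 (fun S => hr1 ▸ le_rfl) hL hxL
      have hx2 : x ∈ L.sem M2 :=
        elu_mono hmono2 (fun S => hr2 ▸ le_rfl) hL hxL
      right
      exact ih ⟨h1.resolve_left (fun h => h hx1), h2.resolve_left (fun h => h hx2)⟩
    · exact Or.inl hxL
  | @ex S H hH ih =>
    rintro x ⟨⟨y, hy1, hy2⟩, -⟩
    have hyW : y ∈ W := hsucc S x y (hr1 ▸ hy1)
    exact ⟨y, hr1 ▸ hy1, (hagree H y hyW).1 hy2⟩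
  | @all S H hH ih =>
    rintro x ⟨h1, h2⟩ 
    intro y hy
    exact ih ⟨h1 y (hr1 ▸ hy), h2 y (hr2 ▸ hy)⟩

end Scratch3


namespace Scratch4
variable {Con Rol : Type}

def cN (E B1 B2 : Con) : Con → Set (Fin 3) := fun A =>
  {x | (A = E ∧ x = 0) ∨ (A = B1 ∧ x = 1) ∨ (A = B2 ∧ x = 2)}

def rr (R : Rol) : Rol → Set (Fin 3 × Fin 3) := fun S =>
  {p | S = R ∧ (p = (0, 1) ∨ p = (0, 2))}

def strN (E B1 B2 : Con) (R : Rol) : Str Con Rol (Fin 3) := ⟨cN E B1 B2, rr R⟩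

def strM1 (E A1 B1 B2 : Con) (R : Rol) : Str Con Rol (Fin 3) :=
  ⟨fun A => cN E B1 B2 A ∪ {x | A = A1 ∧ x = 0}, rr R⟩

end Scratch4


/-- (a) `𝒯_horn` is equivalent to a Horn first-order sentence, but
(b) `𝒯_horn` is not equivalent to any hornALC-TBox. -/
theorem Thorn_horn_but_not_hornALC_TBox {Con Rol : Type}
    (E A1 A2 B1 B2 : Con) (R : Rol)
    (hdist : List.Pairwise (· ≠ ·) [E, A1, A2, B1, B2]) :
    (∃ ψ : FO Con Rol, ψ.IsHorn ∧
      ∀ (D : Type) [Nonempty D] (M : Str Con Rol D) (v : ℕ → D),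
        ψ.sem M v ↔ modelsTBox M (Thorn E A1 A2 B1 B2 R)) ∧
    ¬ ∃ T' : List (ALC Con Rol × ALC Con Rol), IsHornTBox T' ∧
      ∀ (D : Type) [Nonempty D] (M : Str Con Rol D),
        modelsTBox M (Thorn E A1 A2 B1 B2 R) ↔ modelsTBox M T' := by
  simp only [List.pairwise_cons, List.mem_cons, List.not_mem_nil, or_false,
    List.mem_singleton, forall_eq] at hdist
  obtain ⟨hE, hA1, hA2, hB1B2, -⟩ := hdist
  have hEA1 : E ≠ A1 := hE _ (by tauto)
  have hEA2 : E ≠ A2 := hE _ (by tauto)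
  have hEB1 : E ≠ B1 := hE _ (by tauto)
  have hEB2 : E ≠ B2 := hE _ (by tauto)
  have hA1A2 : A1 ≠ A2 := hA1 _ (by tauto)
  have hA1B1 : A1 ≠ B1 := hA1 _ (by tauto)
  have hA1B2 : A1 ≠ B2 := hA1 _ (by tauto)
  have hA2B1 : A2 ≠ B1 := hA2 _ (by tauto)
  have hA2B2 : A2 ≠ B2 := hA2 _ (by tauto)
  constructor
  · exact ⟨Scratch2.psi E A1 A2 B1 B2 R, Scratch2.psi_horn E A1 A2 B1 B2 R,
      fun D _ M v => Scratch2.psi_iff E A1 A2 B1 B2 R M v⟩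
  · rintro ⟨T', hT', heq⟩
    set N : Str Con Rol (Fin 3) := Scratch4.strN E B1 B2 R with hN
    set M1 : Str Con Rol (Fin 3) := Scratch4.strM1 E A1 B1 B2 R with hM1
    set M2 : Str Con Rol (Fin 3) := Scratch4.strM1 E A2 B1 B2 R with hM2
    -- membership lemmas
    have memrol : ∀ (S : Rol) (x y : Fin 3), ((x, y) ∈ (Scratch4.rr R S : Set (Fin 3 × Fin 3))) ↔
        (S = R ∧ (x = 0 ∧ y = 1 ∨ x = 0 ∧ y = 2)) := by
      intro S x y
      simp [Scratch4.rr, Prod.ext_iff]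
    have hModel : ∀ (X : Con) (MX : Str Con Rol (Fin 3)),
        X = A1 ∨ X = A2 → X ≠ E → X ≠ B1 → X ≠ B2 →
        MX.rolI = Scratch4.rr R →
        (∀ A x, x ∈ MX.conI A ↔ (x ∈ Scratch4.cN E B1 B2 A ∨ (A = X ∧ x = 0))) →
        modelsTBox MX (Thorn E A1 A2 B1 B2 R) := by
      intro X MX hXA hXE hXB1 hXB2 hrol hcon
      have memE : ∀ x : Fin 3, x ∈ MX.conI E ↔ x = 0 := by
        intro x
        rw [hcon]
        simp [Scratch4.cN, hEB1, hEB2, Ne.symm hXE]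
      have memX : ∀ x : Fin 3, x ∈ MX.conI X ↔ x = 0 := by
        intro x
        rw [hcon]
        simp [Scratch4.cN, hXE, hXB1, hXB2]
      have memB1 : ∀ x : Fin 3, x ∈ MX.conI B1 ↔ x = 1 := by
        intro x
        rw [hcon]
        simp [Scratch4.cN, Ne.symm hEB1, hB1B2, Ne.symm hXB1]
      have memB2 : ∀ x : Fin 3, x ∈ MX.conI B2 ↔ x = 2 := by
        intro x
        rw [hcon]
        simp [Scratch4.cN, Ne.symm hEB2, Ne.symm hB1B2, Ne.symm hXB2]
      have memrol' : ∀ (x y : Fin 3), ((x, y) ∈ MX.rolI R) ↔ (x = 0 ∧ y = 1 ∨ x = 0 ∧ y = 2) := by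
        intro x y
        rw [hrol, memrol]
        simp
      rw [Scratch.models_thorn_iff]
      refine ⟨?_, ?_, ?_, ?_, ?_⟩
      · intro x hx
        rw [memE] at hx
        rcases hXA with rfl | rfl
        · exact Or.inl ((memX x).2 hx)
        · exact Or.inr (Or.inl ((memX x).2 hx))
      · rintro x y hxy ⟨h1, h2⟩
        rw [memB1] at h1
        rw [memB2] at h2
        rw [h1] at h2
        exact absurd h2 (by decide)
      · intro x hx
        rw [memE] at hx
        refine ⟨1, ?_⟩
        rw [memrol']
        exact Or.inl ⟨hx, rfl⟩
      · intro x y hxy hy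
        rw [memrol'] at hxy
        refine ⟨2, ?_, (memB2 2).2 rfl⟩
        rw [memrol']
        exact Or.inr ⟨by tauto, rfl⟩
      · intro x y hxy hy
        rw [memrol'] at hxy
        refine ⟨1, ?_, (memB1 1).2 rfl⟩
        rw [memrol']
        exact Or.inl ⟨by tauto, rfl⟩
    have hM1T : modelsTBox M1 (Thorn E A1 A2 B1 B2 R) :=
      hModel A1 M1 (Or.inl rfl) hEA1.symm hA1B1 hA1B2 rfl
        (fun A x => by simp [hM1, Scratch4.strM1])
    have hM2T : modelsTBox M2 (Thorn E A1 A2 B1 B2 R) :=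
      hModel A2 M2 (Or.inr rfl) hEA2.symm hA2B1 hA2B2 rfl
        (fun A x => by simp [hM2, Scratch4.strM1])
    -- N is not a model of Thorn
    have hNT : ¬ modelsTBox N (Thorn E A1 A2 B1 B2 R) := by
      rw [Scratch.models_thorn_iff]
      rintro ⟨c1, -, -, -, -⟩
      have h0E : (0 : Fin 3) ∈ N.conI E := by
        simp [hN, Scratch4.strN, Scratch4.cN]
      rcases c1 0 h0E with h | h | ⟨y, hy, hb1, hb2⟩
      · simp [hN, Scratch4.strN, Scratch4.cN, Ne.symm hEA1, hA1B1, hA1B2] at h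
      · simp [hN, Scratch4.strN, Scratch4.cN, Ne.symm hEA2, hA2B1, hA2B2] at h
      · have hy' : (0 : Fin 3) = 0 ∧ y = 1 ∨ (0 : Fin 3) = 0 ∧ y = 2 := by
          have := hy
          simp only [hN, Scratch4.strN] at this
          rw [memrol] at this
          exact this.2
        rcases hy' with ⟨-, rfl⟩ | ⟨-, rfl⟩
        · exact hb1 (by simp [hN, Scratch4.strN, Scratch4.cN])
        · exact hb2 (by simp [hN, Scratch4.strN, Scratch4.cN])
    -- but N satisfies T', contradiction
    apply hNT
    rw [heq (Fin 3) N]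
    intro p hp x hx
    obtain ⟨hL, hH⟩ := hT' p hp
    have hcsub1 : ∀ A, N.conI A ⊆ M1.conI A := by
      intro A
      simp only [hN, hM1, Scratch4.strN, Scratch4.strM1]
      exact Set.subset_union_left
    have hcsub2 : ∀ A, N.conI A ⊆ M2.conI A := by
      intro A
      simp only [hN, hM2, Scratch4.strN, Scratch4.strM1]
      exact Set.subset_union_left
    have hx1 : x ∈ p.2.sem M1 :=
      heq (Fin 3) M1 |>.1 hM1T p hp (Scratch3.elu_mono hcsub1 (fun S => le_rfl) hL hx)
    have hx2 : x ∈ p.2.sem M2 :=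
      heq (Fin 3) M2 |>.1 hM2T p hp (Scratch3.elu_mono hcsub2 (fun S => le_rfl) hL hx)
    refine Scratch3.horn_inter M1 M2 N rfl rfl ?_ {1, 2} ?_ ?_ hH ⟨hx1, hx2⟩
    · intro A
      ext y
      simp only [hM1, hM2, hN, Scratch4.strM1, Scratch4.strN, Set.mem_union,
        Set.mem_setOf_eq, Set.mem_inter_iff]
      constructor
      · intro h; exact ⟨Or.inl h, Or.inl h⟩
      · rintro ⟨h1 | ⟨h1, rfl⟩, h2 | h2⟩
        · exact h1
        · exact h1
        · exact h2
        · exact absurd (h1.symm.trans h2.1) hA1A2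
    · rintro y (rfl | rfl) A <;>
        simp [hM1, hN, Scratch4.strM1, Scratch4.strN]
    · rintro S x y hy
      simp only [hN, Scratch4.strN] at hy
      rw [memrol] at hy
      rcases hy.2 with ⟨-, rfl⟩ | ⟨-, rfl⟩
      · exact Or.inl rfl
      · exact Or.inr rfl
end

section
/- (Expressive completeness for hornALC-concepts.) Let τ be a finite vocabulary and C an ALC-concept of depth ℓ. The following are equivalent: (1) C is equivalent to a hornALC-concept; (2) C is preserved under Horn simulations; (3) C is preserved under ℓ-Horn simulations; (4) C is equivalent to a hornALC-concept of depth ≤ ℓ. Moreover, the same four conditions are equivalent when 'equivalent' and 'preserved' are relativized to finite τ-structures only. -/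
variable {Con Rol D D1 D2 : Type}

/-- Two concepts are equivalent: same extension in every τ-structure. -/
def ConceptEquiv (C C' : ALC Con Rol) : Prop :=
  ∀ (D : Type) [Nonempty D] (M : Str Con Rol D), C.sem M = C'.sem M

/-- Two concepts are equivalent over finite structures. -/
def ConceptEquivFin (C C' : ALC Con Rol) : Prop :=
  ∀ (D : Type) [Nonempty D] [Finite D] (M : Str Con Rol D), C.sem M = C'.sem M

/-- `C` is preserved under Horn simulations. -/
def PreservedHorn (C : ALC Con Rol) : Prop :=
  ∀ (D1 D2 : Type) [Nonempty D1] [Nonempty D2]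
    (M : Str Con Rol D1) (N : Str Con Rol D2) (X : Set D1) (b : D2),
    X ⊆ C.sem M → HornSim M N X b → b ∈ C.sem N

/-- `C` is preserved under ℓ-Horn simulations. -/
def PreservedHornL (C : ALC Con Rol) (ℓ : ℕ) : Prop :=
  ∀ (D1 D2 : Type) [Nonempty D1] [Nonempty D2]
    (M : Str Con Rol D1) (N : Str Con Rol D2) (X : Set D1) (b : D2),
    X ⊆ C.sem M → HornSimL M N ℓ X b → b ∈ C.sem N

/-- `C` is preserved under Horn simulations between finite structures. -/
def PreservedHornFin (C : ALC Con Rol) : Prop :=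
  ∀ (D1 D2 : Type) [Nonempty D1] [Nonempty D2] [Finite D1] [Finite D2]
    (M : Str Con Rol D1) (N : Str Con Rol D2) (X : Set D1) (b : D2),
    X ⊆ C.sem M → HornSim M N X b → b ∈ C.sem N

/-- `C` is preserved under ℓ-Horn simulations between finite structures. -/
def PreservedHornLFin (C : ALC Con Rol) (ℓ : ℕ) : Prop :=
  ∀ (D1 D2 : Type) [Nonempty D1] [Nonempty D2] [Finite D1] [Finite D2]
    (M : Str Con Rol D1) (N : Str Con Rol D2) (X : Set D1) (b : D2),
    X ⊆ C.sem M → HornSimL M N ℓ X b → b ∈ C.sem N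

/-!
Over a finite vocabulary there are finitely many tree types of depth `ℓ`; a concept of depth
`≤ ℓ` is determined by the set of `ℓ`-types realising it, and all these types are the nodes of
one finite canonical structure. Horn simulations transfer between arbitrary structures and
tree types, so preservation only has to be tested on the canonical structure.

For the converse, let `H` be the finite conjunction of all depth-`≤ ℓ` Horn consequences of `C`,
and let `b` satisfy `H`. The types of `C` that simulate the type of `b` still have all their
Horn consequences true at `b`: if a Horn concept `K` holds on them, then `E → K` holds on all
types of `C`, where `E` is an ELU-concept true at `b` and only at types simulating that of `b`.
An induction on `ℓ` turns this entailment into an `ℓ`-Horn simulation from those canonical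
nodes to `b`, and preservation yields `b ∈ C`.
-/

namespace ALC

instance : Inhabited (ALC Con Rol) := ⟨.top⟩

def listConj : List (ALC Con Rol) → ALC Con Rol
  | [] => .top
  | C :: l => .conj C (listConj l)

theorem mem_sem_listConj (M : Str Con Rol D) (a : D) (l : List (ALC Con Rol)) :
    a ∈ (listConj l).sem M ↔ ∀ C ∈ l, a ∈ C.sem M := by
  induction l with
  | nil => simp [listConj, sem]
  | cons C l ih => simp [listConj, sem, ih]

theorem IsHorn.listConj {l : List (ALC Con Rol)} (h : ∀ C ∈ l, C.IsHorn) :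
    (ALC.listConj l).IsHorn := by
  induction l with
  | nil => exact .top
  | cons C l ih => exact .conj (h C (by simp)) (ih fun C' hC' => h C' (by simp [hC']))

theorem IsELU.listConj {l : List (ALC Con Rol)} (h : ∀ C ∈ l, C.IsELU) :
    (ALC.listConj l).IsELU := by
  induction l with
  | nil => exact .top
  | cons C l ih => exact .conj (h C (by simp)) (ih fun C' hC' => h C' (by simp [hC']))

theorem depth_listConj_le {l : List (ALC Con Rol)} {k : ℕ} (h : ∀ C ∈ l, C.depth ≤ k) :
    (listConj l).depth ≤ k := by
  induction l with
  | nil => exact Nat.zero_le k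
  | cons C l ih => exact max_le (h C (by simp)) (ih fun C' hC' => h C' (by simp [hC']))

noncomputable def setConj {ι : Type} [Finite ι] (s : Set ι) (f : ι → ALC Con Rol) :
    ALC Con Rol :=
  listConj (s.toFinite.toFinset.toList.map f)

variable {ι : Type} [Finite ι] {s : Set ι} {f : ι → ALC Con Rol}

theorem mem_sem_setConj (M : Str Con Rol D) (a : D) :
    a ∈ (setConj s f).sem M ↔ ∀ i ∈ s, a ∈ (f i).sem M := by
  simp [setConj, mem_sem_listConj]

theorem IsHorn.setConj (h : ∀ i ∈ s, (f i).IsHorn) : (ALC.setConj s f).IsHorn :=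
  IsHorn.listConj (by simpa using h)

theorem IsELU.setConj (h : ∀ i ∈ s, (f i).IsELU) : (ALC.setConj s f).IsELU :=
  IsELU.listConj (by simpa using h)

theorem depth_setConj_le {k : ℕ} (h : ∀ i ∈ s, (f i).depth ≤ k) : (setConj s f).depth ≤ k :=
  depth_listConj_le (by simpa using h)

variable {M : Str Con Rol D1} {N : Str Con Rol D2}

theorem IsELU.mem_sem_of_isSim {E : ALC Con Rol} (hE : E.IsELU) {S : Set (D1 × D2)}
    (hS : IsSim M N S) {a : D1} {b : D2} (hab : (a, b) ∈ S) (ha : a ∈ E.sem M) :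
    b ∈ E.sem N := by
  induction hE generalizing a b with
  | top => trivial
  | atomic A => exact (hS a b hab).1 A ha
  | conj _ _ ih ih' => exact ⟨ih hab ha.1, ih' hab ha.2⟩
  | disj _ _ ih ih' => exact ha.imp (ih hab) (ih' hab)
  | ex R _ ih =>
    obtain ⟨a', haa', ha'⟩ := ha
    obtain ⟨b', hbb', hab'⟩ := (hS a b hab).2 R a' haa'
    exact ⟨b', hbb', ih hab' ha'⟩

theorem IsELU.mem_sem_of_sim {E : ALC Con Rol} (hE : E.IsELU) {a : D1} {b : D2}
    (h : Sim M N a b) (ha : a ∈ E.sem M) : b ∈ E.sem N :=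
  let ⟨_, hS, hab⟩ := h
  hE.mem_sem_of_isSim hS hab ha

theorem IsHorn.mem_sem_of_isHornSim {H : ALC Con Rol} (hH : H.IsHorn)
    {Z : Set (Set D1 × D2)} (hZ : IsHornSim M N Z) {X : Set D1} {b : D2} (hXb : (X, b) ∈ Z)
    (hX : X ⊆ H.sem M) : b ∈ H.sem N := by
  induction hH generalizing X b with
  | bot => exact (hX (hZ X b hXb).1.some_mem).elim
  | top => trivial
  | atomic A => exact (hZ X b hXb).2.1 A hX
  | conj _ _ ih ih' => exact ⟨ih hXb fun _ ha => (hX ha).1, ih' hXb fun _ ha => (hX ha).2⟩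
  | @impl L _ hL _ ih =>
    refine or_iff_not_imp_left.2 fun hbL => ih hXb fun a ha => ?_
    have haL : a ∈ L.sem M := hL.mem_sem_of_sim ((hZ X b hXb).2.2.2.2 a ha) (not_not.1 hbL)
    exact (hX ha).resolve_left (not_not.2 haL)
  | @ex R H' _ ih =>
    obtain ⟨Y, hYH', b', hbb', hYb'⟩ :=
      (hZ X b hXb).2.2.1 R (H'.sem M) fun a ha => (hX ha).imp fun _ h => h.symm
    exact ⟨b', hbb', ih hYb' hYH'⟩
  | all R _ ih =>
    intro b' hbb'
    obtain ⟨Y, hYX, hYb'⟩ := (hZ X b hXb).2.2.2.1 R b' hbb'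
    refine ih hYb' fun y hy => ?_
    obtain ⟨a, ha, hay⟩ := hYX y hy
    exact hX ha y hay

theorem IsHorn.mem_sem_of_hornSim {H : ALC Con Rol} (hH : H.IsHorn) {X : Set D1} {b : D2}
    (h : HornSim M N X b) (hX : X ⊆ H.sem M) : b ∈ H.sem N :=
  let ⟨_, hZ, hXb⟩ := h
  hH.mem_sem_of_isHornSim hZ hXb hX

end ALC

/-- Isomorphism types of depth-`k` unravellings: a label and, for each role, the set of
types of the successors. -/
def TreeType (Con Rol : Type) : ℕ → Type
  | 0 => Set Con
  | k + 1 => Set Con × (Rol → Set (TreeType Con Rol k))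

namespace TreeType

instance finite [Finite Con] [Finite Rol] : ∀ k, Finite (TreeType Con Rol k)
  | 0 => inferInstanceAs (Finite (Set Con))
  | k + 1 =>
    have := finite k
    inferInstanceAs (Finite (Set Con × (Rol → Set (TreeType Con Rol k))))

def label : {k : ℕ} → TreeType Con Rol k → Set Con
  | 0, t => t
  | _ + 1, t => t.1

end TreeType

namespace Str

def treeType (M : Str Con Rol D) : (k : ℕ) → D → TreeType Con Rol k
  | 0, a => {A | a ∈ M.conI A}
  | k + 1, a => ({A | a ∈ M.conI A},
      fun R => {s | ∃ a', (a, a') ∈ M.rolI R ∧ treeType M k a' = s})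

variable (M : Str Con Rol D1) (N : Str Con Rol D2)

theorem mem_label_treeType (k : ℕ) (a : D1) (A : Con) :
    A ∈ (M.treeType k a).label ↔ a ∈ M.conI A := by
  cases k <;> rfl

theorem label_treeType_subset_iff (k : ℕ) (a : D1) (b : D2) :
    (M.treeType k a).label ⊆ (N.treeType k b).label ↔ ∀ A, a ∈ M.conI A → b ∈ N.conI A := by
  simp only [Set.subset_def, mem_label_treeType]

theorem exists_rolI_treeType_eq {k : ℕ} {a : D1} {b : D2}
    (h : M.treeType (k + 1) a = N.treeType (k + 1) b) {R : Rol} {a' : D1}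
    (haa' : (a, a') ∈ M.rolI R) : ∃ b', (b, b') ∈ N.rolI R ∧ M.treeType k a' = N.treeType k b' := by
  have : M.treeType k a' ∈ (N.treeType (k + 1) b).2 R := h ▸ ⟨a', haa', rfl⟩
  obtain ⟨b', hbb', hb'⟩ := this
  exact ⟨b', hbb', hb'.symm⟩

end Str

theorem ALC.mem_sem_iff_of_treeType_eq {M : Str Con Rol D1} {N : Str Con Rol D2} (C : ALC Con Rol)
    {k : ℕ} (hk : C.depth ≤ k) {a : D1} {b : D2} (h : M.treeType k a = N.treeType k b) :
    a ∈ C.sem M ↔ b ∈ C.sem N := by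
  induction C generalizing k a b with
  | top | bot => rfl
  | atomic A => rw [sem, sem, ← M.mem_label_treeType k, ← N.mem_label_treeType k, h]
  | neg C ih => exact not_congr (ih hk h)
  | disj C C' ih ih' =>
    exact or_congr (ih (le_of_max_le_left hk) h) (ih' (le_of_max_le_right hk) h)
  | conj C C' ih ih' =>
    exact and_congr (ih (le_of_max_le_left hk) h) (ih' (le_of_max_le_right hk) h)
  | impl C C' ih ih' =>
    exact or_congr (not_congr (ih (le_of_max_le_left hk) h)) (ih' (le_of_max_le_right hk) h)
  | ex R C ih =>
    obtain ⟨k, rfl⟩ := Nat.exists_eq_add_of_le' (Nat.lt_of_lt_of_le C.depth.succ_pos hk)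
    have hk : C.depth ≤ k := by simpa [depth] using hk
    constructor
    · rintro ⟨a', haa', ha'⟩
      obtain ⟨b', hbb', hab'⟩ := M.exists_rolI_treeType_eq N h haa'
      exact ⟨b', hbb', (ih hk hab').1 ha'⟩
    · rintro ⟨b', hbb', hb'⟩
      obtain ⟨a', haa', hab'⟩ := N.exists_rolI_treeType_eq M h.symm hbb'
      exact ⟨a', haa', (ih hk hab'.symm).2 hb'⟩
  | all R C ih =>
    obtain ⟨k, rfl⟩ := Nat.exists_eq_add_of_le' (Nat.lt_of_lt_of_le C.depth.succ_pos hk)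
    have hk : C.depth ≤ k := by simpa [depth] using hk
    constructor
    · intro ha b' hbb'
      obtain ⟨a', haa', hab'⟩ := N.exists_rolI_treeType_eq M h.symm hbb'
      exact (ih hk hab'.symm).1 (ha a' haa')
    · intro hb a' haa'
      obtain ⟨b', hbb', hab'⟩ := M.exists_rolI_treeType_eq N h haa'
      exact (ih hk hab').2 (hb b' hbb')

def CanonDom (Con Rol : Type) (ℓ : ℕ) : Type := Σ k : Fin (ℓ + 1), TreeType Con Rol k

def canonNode (ℓ : ℕ) {k : ℕ} (hk : k ≤ ℓ) (t : TreeType Con Rol k) : CanonDom Con Rol ℓ :=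
  ⟨⟨k, Nat.lt_succ_of_le hk⟩, t⟩

/-- The canonical structure of height `ℓ`: its nodes are the tree types of depth at most `ℓ`,
and an `R`-edge leads from a type of depth `k + 1` to each of its `R`-successor types. -/
def canonStr (Con Rol : Type) (ℓ : ℕ) : Str Con Rol (CanonDom Con Rol ℓ) where
  conI A := {x | A ∈ x.2.label}
  rolI R := {p | ∃ (j : ℕ) (hj : j + 1 ≤ ℓ) (t : TreeType Con Rol (j + 1)) (s : TreeType Con Rol j),
      p = (canonNode ℓ hj t, canonNode ℓ (Nat.le_of_succ_le hj) s) ∧ s ∈ t.2 R}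

namespace CanonDom

instance (ℓ : ℕ) : Nonempty (CanonDom Con Rol ℓ) := ⟨canonNode ℓ (Nat.zero_le ℓ) (∅ : Set Con)⟩

instance [Finite Con] [Finite Rol] (ℓ : ℕ) : Finite (CanonDom Con Rol ℓ) :=
  inferInstanceAs (Finite (Σ k : Fin (ℓ + 1), TreeType Con Rol k))

end CanonDom

section Canonical

variable {ℓ : ℕ}

theorem canonNode_mem_rolI {k : ℕ} (hk : k + 1 ≤ ℓ) {t : TreeType Con Rol (k + 1)}
    {s : TreeType Con Rol k} {R : Rol} (h : s ∈ t.2 R) :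
    (canonNode ℓ hk t, canonNode ℓ (Nat.le_of_succ_le hk) s) ∈ (canonStr Con Rol ℓ).rolI R :=
  ⟨k, hk, t, s, rfl, h⟩

theorem exists_of_canonNode_mem_rolI {k : ℕ} {hk : k + 1 ≤ ℓ} {t : TreeType Con Rol (k + 1)}
    {y : CanonDom Con Rol ℓ} {R : Rol} (h : (canonNode ℓ hk t, y) ∈ (canonStr Con Rol ℓ).rolI R) :
    ∃ s, y = canonNode ℓ (Nat.le_of_succ_le hk) s ∧ s ∈ t.2 R := by
  obtain ⟨j, hj, t', s, hp, hs⟩ := h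
  obtain ⟨hnode, rfl⟩ := Prod.mk.inj hp
  obtain ⟨hkj, htt'⟩ := Sigma.mk.inj hnode
  obtain rfl : k = j := by simpa using hkj
  cases htt'
  exact ⟨s, rfl, hs⟩

theorem canonNode_zero_not_mem_rolI {hk : 0 ≤ ℓ} {t : TreeType Con Rol 0}
    {y : CanonDom Con Rol ℓ} {R : Rol} : (canonNode ℓ hk t, y) ∉ (canonStr Con Rol ℓ).rolI R := by
  rintro ⟨j, hj, t', s, hp, -⟩
  have := congrArg (fun p => p.1.1.val) hp
  simp [canonNode] at this

theorem treeType_canonNode {k : ℕ} (hk : k ≤ ℓ) (t : TreeType Con Rol k) :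
    (canonStr Con Rol ℓ).treeType k (canonNode ℓ hk t) = t := by
  induction k with
  | zero => rfl
  | succ k ih =>
    refine Prod.ext rfl (funext fun R => Set.ext fun s => ⟨?_, fun hs => ?_⟩)
    · rintro ⟨y, hty, rfl⟩
      obtain ⟨s, rfl, hs⟩ := exists_of_canonNode_mem_rolI hty
      rwa [ih]
    · exact ⟨_, canonNode_mem_rolI hk hs, ih _ s⟩

end Canonical

namespace ALC

def typeSet (k : ℕ) (C : ALC Con Rol) : Set (TreeType Con Rol k) :=
  {t | canonNode k le_rfl t ∈ C.sem (canonStr Con Rol k)}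

variable {k : ℕ}

theorem mem_sem_iff_treeType_mem_typeSet {C : ALC Con Rol} (hk : C.depth ≤ k)
    (M : Str Con Rol D) (a : D) : a ∈ C.sem M ↔ M.treeType k a ∈ C.typeSet k :=
  C.mem_sem_iff_of_treeType_eq hk (treeType_canonNode le_rfl _).symm

theorem mem_sem_canonNode_iff {ℓ : ℕ} {C : ALC Con Rol} (hk : C.depth ≤ k) (hkℓ : k ≤ ℓ)
    (t : TreeType Con Rol k) :
    canonNode ℓ hkℓ t ∈ C.sem (canonStr Con Rol ℓ) ↔ t ∈ C.typeSet k := by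
  rw [mem_sem_iff_treeType_mem_typeSet hk, treeType_canonNode]

theorem mem_typeSet_impl {C C' : ALC Con Rol} {t : TreeType Con Rol k} :
    t ∈ (impl C C').typeSet k ↔ (t ∈ C.typeSet k → t ∈ C'.typeSet k) := imp_iff_not_or.symm

theorem mem_typeSet_setConj {ι : Type} [Finite ι] {s : Set ι} {f : ι → ALC Con Rol}
    {t : TreeType Con Rol k} : t ∈ (setConj s f).typeSet k ↔ ∀ i ∈ s, t ∈ (f i).typeSet k :=
  mem_sem_setConj _ _

theorem mem_typeSet_ex {C : ALC Con Rol} (hC : C.depth ≤ k) {R : Rol}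
    {t : TreeType Con Rol (k + 1)} :
    t ∈ (ex R C).typeSet (k + 1) ↔ ∃ s ∈ t.2 R, s ∈ C.typeSet k := by
  constructor
  · rintro ⟨y, hty, hy⟩
    obtain ⟨s, rfl, hs⟩ := exists_of_canonNode_mem_rolI hty
    exact ⟨s, hs, (mem_sem_canonNode_iff hC _ s).1 hy⟩
  · rintro ⟨s, hs, hsC⟩
    exact ⟨_, canonNode_mem_rolI le_rfl hs, (mem_sem_canonNode_iff hC _ s).2 hsC⟩

theorem mem_typeSet_all {C : ALC Con Rol} (hC : C.depth ≤ k) {R : Rol}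
    {t : TreeType Con Rol (k + 1)} :
    t ∈ (all R C).typeSet (k + 1) ↔ ∀ s ∈ t.2 R, s ∈ C.typeSet k := by
  constructor
  · intro ht s hs
    exact (mem_sem_canonNode_iff hC _ s).1 (ht _ (canonNode_mem_rolI le_rfl hs))
  · intro ht y hty
    obtain ⟨s, rfl, hs⟩ := exists_of_canonNode_mem_rolI hty
    exact (mem_sem_canonNode_iff hC _ s).2 (ht s hs)

end ALC

def TreeSim : (k : ℕ) → TreeType Con Rol k → TreeType Con Rol k → Prop
  | 0, u, t => u.label ⊆ t.label
  | k + 1, u, t => u.label ⊆ t.label ∧ ∀ R, ∀ u' ∈ u.2 R, ∃ t' ∈ t.2 R, TreeSim k u' t'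

theorem TreeSim.label_subset {k : ℕ} {u t : TreeType Con Rol k} (h : TreeSim k u t) :
    u.label ⊆ t.label := by
  cases k with
  | zero => exact h
  | succ k => exact h.1

theorem simL_iff_treeSim (M : Str Con Rol D1) (N : Str Con Rol D2) (k : ℕ) (a : D1) (b : D2) :
    SimL M N k a b ↔ TreeSim k (M.treeType k a) (N.treeType k b) := by
  induction k generalizing a b with
  | zero => exact (Str.label_treeType_subset_iff M N 0 a b).symm
  | succ k ih =>
    refine and_congr (Str.label_treeType_subset_iff M N _ a b).symm
      ⟨fun h R => ?_, fun h R a' haa' => ?_⟩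
    · rintro _ ⟨a', haa', rfl⟩
      obtain ⟨b', hbb', hab'⟩ := h R a' haa'
      exact ⟨_, ⟨b', hbb', rfl⟩, (ih a' b').1 hab'⟩
    · obtain ⟨_, ⟨b', hbb', rfl⟩, hab'⟩ := h R _ ⟨a', haa', rfl⟩
      exact ⟨b', hbb', (ih a' b').2 hab'⟩

theorem sim_canonNode_of_treeSim {ℓ k : ℕ} (hk : k ≤ ℓ) {u t : TreeType Con Rol k}
    (h : TreeSim k u t) :
    Sim (canonStr Con Rol ℓ) (canonStr Con Rol ℓ) (canonNode ℓ hk u) (canonNode ℓ hk t) := by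
  refine ⟨{p | ∃ (j : ℕ) (hj : j ≤ ℓ) (u t : TreeType Con Rol j),
      p = (canonNode ℓ hj u, canonNode ℓ hj t) ∧ TreeSim j u t}, ?_, ⟨k, hk, u, t, rfl, h⟩⟩
  rintro _ _ ⟨j, hj, u, t, hp, hut⟩
  obtain ⟨rfl, rfl⟩ := Prod.mk.inj hp
  refine ⟨fun A hA => hut.label_subset hA, fun R y hy => ?_⟩
  cases j with
  | zero => exact absurd hy canonNode_zero_not_mem_rolI
  | succ j =>
    obtain ⟨u', rfl, hu'⟩ := exists_of_canonNode_mem_rolI hy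
    obtain ⟨t', ht', hut'⟩ := hut.2 R u' hu'
    exact ⟨_, canonNode_mem_rolI hj ht', j, _, u', t', rfl, hut'⟩

def HornEntails (k : ℕ) (𝒳 : Set (TreeType Con Rol k)) (u : TreeType Con Rol k) : Prop :=
  ∀ K : ALC Con Rol, K.IsHorn → K.depth ≤ k → 𝒳 ⊆ K.typeSet k → u ∈ K.typeSet k

def TreeHornSimBase (k : ℕ) (𝒳 : Set (TreeType Con Rol k)) (u : TreeType Con Rol k) : Prop :=
  𝒳.Nonempty ∧ (∀ A, (∀ t ∈ 𝒳, A ∈ t.label) → A ∈ u.label) ∧ ∀ t ∈ 𝒳, TreeSim k u t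

/-- The `k`-round Horn simulations of `HornSimL`, transported to tree types. -/
def TreeHornSim : (k : ℕ) → Set (TreeType Con Rol k) → TreeType Con Rol k → Prop
  | 0, 𝒳, u => TreeHornSimBase 0 𝒳 u
  | k + 1, 𝒳, u => TreeHornSimBase (k + 1) 𝒳 u ∧
      (∀ R (𝒴 : Set (TreeType Con Rol k)), (∀ t ∈ 𝒳, ∃ s ∈ 𝒴, s ∈ t.2 R) →
        ∃ 𝒴' ⊆ 𝒴, ∃ v ∈ u.2 R, TreeHornSim k 𝒴' v) ∧
      (∀ R, ∀ v ∈ u.2 R, ∃ 𝒴, (∀ s ∈ 𝒴, ∃ t ∈ 𝒳, s ∈ t.2 R) ∧ TreeHornSim k 𝒴 v)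

theorem TreeHornSim.base {k : ℕ} {𝒳 : Set (TreeType Con Rol k)} {u : TreeType Con Rol k}
    (h : TreeHornSim k 𝒳 u) : TreeHornSimBase k 𝒳 u := by
  cases k with
  | zero => exact h
  | succ k => exact h.1

namespace HornEntails

variable {k : ℕ}

theorem treeHornSimBase {𝒳 : Set (TreeType Con Rol k)} {u : TreeType Con Rol k} (h : HornEntails k 𝒳 u) (hsim : ∀ t ∈ 𝒳, TreeSim k u t) :
    TreeHornSimBase k 𝒳 u := by
  refine ⟨?_, fun A hA => h (.atomic A) (.atomic A) (Nat.zero_le k) hA, hsim⟩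
  rw [Set.nonempty_iff_ne_empty]
  rintro rfl
  exact h .bot .bot (Nat.zero_le k) (Set.empty_subset _)

theorem succ {𝒳 : Set (TreeType Con Rol (k + 1))} {u : TreeType Con Rol (k + 1)}
    (h : HornEntails (k + 1) 𝒳 u) {R : Rol} {v : TreeType Con Rol k} (hv : v ∈ u.2 R) :
    HornEntails k {s | ∃ t ∈ 𝒳, s ∈ t.2 R} v := fun K hK hKd h𝒳K =>
  (ALC.mem_typeSet_all hKd).1
    (h (.all R K) (.all R hK) (Nat.succ_le_succ hKd)
      fun t ht => (ALC.mem_typeSet_all hKd).2 fun _ hs => h𝒳K ⟨t, ht, hs⟩) v hv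

end HornEntails

theorem SimL.zero {M : Str Con Rol D1} {N : Str Con Rol D2} {k : ℕ} {a : D1} {b : D2}
    (h : SimL M N k a b) : SimL M N 0 a b := by
  cases k with
  | zero => exact h
  | succ k => exact h.1

section Transfer

variable {M : Str Con Rol D1} {N : Str Con Rol D2}

theorem treeHornSimBase_image_iff (M : Str Con Rol D1) (N : Str Con Rol D2) (k : ℕ)
    (X : Set D1) (b : D2) :
    TreeHornSimBase k (M.treeType k '' X) (N.treeType k b) ↔
      X.Nonempty ∧ (∀ A, X ⊆ M.conI A → b ∈ N.conI A) ∧ ∀ a ∈ X, SimL N M k b a := by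
  simp only [TreeHornSimBase, Set.image_nonempty, Set.forall_mem_image, Str.mem_label_treeType,
    simL_iff_treeSim, Set.subset_def]

theorem hornSimL_of_treeHornSim {k : ℕ} {X : Set D1} {b : D2}
    (h : TreeHornSim k (M.treeType k '' X) (N.treeType k b)) : HornSimL M N k X b := by
  induction k generalizing X b with
  | zero => exact (treeHornSimBase_image_iff M N 0 X b).1 h
  | succ k ih =>
    obtain ⟨hbase, hforth, hback⟩ := h
    obtain ⟨hne, hatom, hsim⟩ := (treeHornSimBase_image_iff M N _ X b).1 hbase
    refine ⟨⟨hne, hatom, fun a ha => (hsim a ha).zero⟩, fun R Y hXY => ?_,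
      fun R b' hbb' => ?_, hsim⟩
    · let Y₀ := {y ∈ Y | ∃ a ∈ X, (a, y) ∈ M.rolI R}
      obtain ⟨𝒴', h𝒴', _, ⟨b', hbb', rfl⟩, h𝒴'b'⟩ :=
        hforth R (M.treeType k '' Y₀) <| Set.forall_mem_image.2 fun a ha => by
          obtain ⟨y, hy, hay⟩ := hXY a ha
          exact ⟨_, ⟨y, ⟨hy, a, ha, hay⟩, rfl⟩, y, hay, rfl⟩
      refine ⟨Y₀ ∩ M.treeType k ⁻¹' 𝒴', fun y hy => hy.1.1, b', hbb', ih ?_⟩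
      rwa [Set.image_inter_preimage, Set.inter_eq_right.2 h𝒴']
    · obtain ⟨𝒴, hX𝒴, h𝒴b'⟩ := hback R _ ⟨b', hbb', rfl⟩
      let Y₁ := {y | ∃ a ∈ X, (a, y) ∈ M.rolI R}
      have h𝒴 : 𝒴 ⊆ M.treeType k '' Y₁ := fun s hs => by
        obtain ⟨_, ⟨a, ha, rfl⟩, y, hay, rfl⟩ := hX𝒴 s hs
        exact ⟨y, ⟨a, ha, hay⟩, rfl⟩
      refine ⟨Y₁ ∩ M.treeType k ⁻¹' 𝒴, fun y hy => hy.1, ih ?_⟩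
      rwa [Set.image_inter_preimage, Set.inter_eq_right.2 h𝒴]

theorem treeHornSim_of_hornSimL {k : ℕ} {X : Set D1} {b : D2} (h : HornSimL M N k X b) :
    TreeHornSim k (M.treeType k '' X) (N.treeType k b) := by
  induction k generalizing X b with
  | zero => exact (treeHornSimBase_image_iff M N 0 X b).2 h
  | succ k ih =>
    obtain ⟨⟨hne, hatom, -⟩, hforth, hback, hsim⟩ := h
    refine ⟨(treeHornSimBase_image_iff M N _ X b).2 ⟨hne, hatom, hsim⟩, fun R 𝒴 hX𝒴 => ?_, ?_⟩
    · obtain ⟨Y', hY', b', hbb', hY'b'⟩ := hforth R {y | M.treeType k y ∈ 𝒴} fun a ha => by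
        obtain ⟨_, hs, y, hay, rfl⟩ := hX𝒴 _ ⟨a, ha, rfl⟩
        exact ⟨y, hs, hay⟩
      exact ⟨_, Set.image_subset_iff.2 hY', _, ⟨b', hbb', rfl⟩, ih hY'b'⟩
    · rintro R _ ⟨b', hbb', rfl⟩
      obtain ⟨Y, hXY, hYb'⟩ := hback R b' hbb'
      refine ⟨_, ?_, ih hYb'⟩
      rintro _ ⟨y, hy, rfl⟩
      obtain ⟨a, ha, hay⟩ := hXY y hy
      exact ⟨_, ⟨a, ha, rfl⟩, y, hay, rfl⟩

end Transfer

theorem hornSim_canonNode_of_treeHornSim {ℓ : ℕ} {𝒳 : Set (TreeType Con Rol ℓ)}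
    {u : TreeType Con Rol ℓ} (h : TreeHornSim ℓ 𝒳 u) :
    HornSim (canonStr Con Rol ℓ) (canonStr Con Rol ℓ) (canonNode ℓ le_rfl '' 𝒳)
      (canonNode ℓ le_rfl u) := by
  refine ⟨{p | ∃ (k : ℕ) (hk : k ≤ ℓ) (𝒳 : Set (TreeType Con Rol k)) (u : TreeType Con Rol k),
      TreeHornSim k 𝒳 u ∧ p = (canonNode ℓ hk '' 𝒳, canonNode ℓ hk u)}, ?_,
      ⟨ℓ, le_rfl, 𝒳, u, h, rfl⟩⟩
  rintro _ _ ⟨k, hk, 𝒳, u, h, hp⟩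
  obtain ⟨rfl, rfl⟩ := Prod.mk.inj hp
  obtain ⟨hne, hatom, hsim⟩ := h.base
  refine ⟨hne.image _, fun A hA => hatom A fun t ht => hA ⟨t, ht, rfl⟩, fun R Y hXY => ?_,
    fun R y hy => ?_, Set.forall_mem_image.2 fun t ht => sim_canonNode_of_treeSim hk (hsim t ht)⟩
  · cases k with
    | zero =>
      obtain ⟨y, -, hy⟩ := hXY _ ⟨_, hne.some_mem, rfl⟩
      exact absurd hy canonNode_zero_not_mem_rolI
    | succ k =>
      obtain ⟨𝒴', h𝒴', v, hv, h𝒴'v⟩ :=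
        h.2.1 R {s | canonNode ℓ (Nat.le_of_succ_le hk) s ∈ Y} fun t ht => by
          obtain ⟨y, hy, hty⟩ := hXY _ ⟨t, ht, rfl⟩
          obtain ⟨s, rfl, hs⟩ := exists_of_canonNode_mem_rolI hty
          exact ⟨s, hy, hs⟩
      exact ⟨_, Set.image_subset_iff.2 h𝒴', _, canonNode_mem_rolI hk hv, k, _, 𝒴', v, h𝒴'v, rfl⟩
  · cases k with
    | zero => exact absurd hy canonNode_zero_not_mem_rolI
    | succ k =>
      obtain ⟨v, rfl, hv⟩ := exists_of_canonNode_mem_rolI hy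
      obtain ⟨𝒴, h𝒴, h𝒴v⟩ := h.2.2 R v hv
      refine ⟨_, ?_, k, _, 𝒴, v, h𝒴v, rfl⟩
      rintro _ ⟨s, hs, rfl⟩
      obtain ⟨t, ht, hst⟩ := h𝒴 s hs
      exact ⟨_, ⟨t, ht, rfl⟩, canonNode_mem_rolI hk hst⟩

theorem mem_sem_of_hornSimL_of_preserved {C : ALC Con Rol} {ℓ : ℕ} (hd : C.depth ≤ ℓ)
    (hpres : ∀ X u, X ⊆ C.sem (canonStr Con Rol ℓ) →
      HornSim (canonStr Con Rol ℓ) (canonStr Con Rol ℓ) X u → u ∈ C.sem (canonStr Con Rol ℓ))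
    {M : Str Con Rol D1} {N : Str Con Rol D2} {X : Set D1} {b : D2} (hX : X ⊆ C.sem M)
    (h : HornSimL M N ℓ X b) : b ∈ C.sem N := by
  refine (C.mem_sem_iff_treeType_mem_typeSet hd N b).2 <|
    hpres _ _ ?_ (hornSim_canonNode_of_treeHornSim (treeHornSim_of_hornSimL h))
  rintro _ ⟨_, ⟨a, ha, rfl⟩, rfl⟩
  exact (C.mem_sem_iff_treeType_mem_typeSet hd M a).1 (hX ha)

section FiniteVocabulary

variable [Finite Con] [Finite Rol]

theorem exists_isELU_separating {k : ℕ} {u t : TreeType Con Rol k} (h : ¬ TreeSim k u t) :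
    ∃ E : ALC Con Rol, E.IsELU ∧ E.depth ≤ k ∧ u ∈ E.typeSet k ∧ t ∉ E.typeSet k := by
  have of_label {k : ℕ} {u t : TreeType Con Rol k} (h : ¬ u.label ⊆ t.label) :
      ∃ E : ALC Con Rol, E.IsELU ∧ E.depth ≤ k ∧ u ∈ E.typeSet k ∧ t ∉ E.typeSet k :=
    let ⟨A, hAu, hAt⟩ := Set.not_subset.1 h
    ⟨.atomic A, .atomic A, Nat.zero_le k, hAu, hAt⟩
  induction k with
  | zero => exact of_label h
  | succ k ih =>
    by_cases hlabel : u.label ⊆ t.label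
    · obtain ⟨R, u', hu', hsep⟩ : ∃ R, ∃ u' ∈ u.2 R, ∀ t' ∈ t.2 R, ¬ TreeSim k u' t' := by
        simpa [TreeSim, hlabel] using h
      choose! F hFELU hFdepth hFu' hFt' using fun t' ht' => ih (hsep t' ht')
      refine ⟨.ex R (ALC.setConj (t.2 R) F), .ex R (.setConj hFELU),
        Nat.succ_le_succ (ALC.depth_setConj_le hFdepth), ?_, ?_⟩
      · exact (ALC.mem_typeSet_ex (ALC.depth_setConj_le hFdepth)).2
          ⟨u', hu', ALC.mem_typeSet_setConj.2 hFu'⟩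
      · rw [ALC.mem_typeSet_ex (ALC.depth_setConj_le hFdepth)]
        rintro ⟨t', ht', hFt⟩
        exact hFt' t' ht' (ALC.mem_typeSet_setConj.1 hFt t' ht')
    · exact of_label hlabel

theorem exists_isELU_cone {k : ℕ} (u : TreeType Con Rol k) :
    ∃ E : ALC Con Rol, E.IsELU ∧ E.depth ≤ k ∧ u ∈ E.typeSet k ∧
      ∀ t ∈ E.typeSet k, TreeSim k u t := by
  choose! F hFELU hFdepth hFu hFt using
    fun t (ht : t ∈ {t | ¬ TreeSim k u t}) => exists_isELU_separating ht
  refine ⟨ALC.setConj _ F, .setConj hFELU, ALC.depth_setConj_le hFdepth,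
    ALC.mem_typeSet_setConj.2 hFu, fun t ht => ?_⟩
  by_contra hut
  exact hFt t hut (ALC.mem_typeSet_setConj.1 ht t hut)

namespace HornEntails

variable {k : ℕ}

/-- If `K` holds on the restriction, then the Horn concept `E → K` holds on `𝒳`, where `E` is
the ELU cone of `u`. -/
theorem restrict_treeSim {𝒳 : Set (TreeType Con Rol k)} {u : TreeType Con Rol k}
    (h : HornEntails k 𝒳 u) : HornEntails k {t ∈ 𝒳 | TreeSim k u t} u := by
  intro K hK hKd h𝒳K
  obtain ⟨E, hE, hEd, huE, hEsim⟩ := exists_isELU_cone u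
  refine ALC.mem_typeSet_impl.1 (h (.impl E K) (.impl hE hK) (max_le hEd hKd) ?_) huE
  exact fun t ht => ALC.mem_typeSet_impl.2 fun htE => h𝒳K ⟨ht, hEsim t htE⟩

theorem exists_succ {𝒳 : Set (TreeType Con Rol (k + 1))} {u : TreeType Con Rol (k + 1)}
    (h : HornEntails (k + 1) 𝒳 u) {R : Rol} {𝒴 : Set (TreeType Con Rol k)}
    (h𝒴 : ∀ t ∈ 𝒳, ∃ s ∈ 𝒴, s ∈ t.2 R) : ∃ v ∈ u.2 R, HornEntails k 𝒴 v := by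
  by_contra! hcon
  simp only [HornEntails, not_forall, exists_prop] at hcon
  choose! G hG hGd h𝒴G hvG using hcon
  have hd : (ALC.setConj (u.2 R) G).depth ≤ k := ALC.depth_setConj_le hGd
  obtain ⟨v, hv, hvG'⟩ := (ALC.mem_typeSet_ex hd).1 <|
    h (.ex R (ALC.setConj (u.2 R) G)) (.ex R (.setConj hG)) (Nat.succ_le_succ hd) fun t ht => by
      obtain ⟨s, hs𝒴, hst⟩ := h𝒴 t ht
      exact (ALC.mem_typeSet_ex hd).2 ⟨s, hst, ALC.mem_typeSet_setConj.2 fun v hv => h𝒴G v hv hs𝒴⟩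
  exact hvG v hv (ALC.mem_typeSet_setConj.1 hvG' v hv)

end HornEntails

theorem treeHornSim_of_hornEntails {k : ℕ} {𝒳 : Set (TreeType Con Rol k)}
    {u : TreeType Con Rol k} (h : HornEntails k 𝒳 u) (hsim : ∀ t ∈ 𝒳, TreeSim k u t) :
    TreeHornSim k 𝒳 u := by
  induction k with
  | zero => exact h.treeHornSimBase hsim
  | succ k ih =>
    refine ⟨h.treeHornSimBase hsim, fun R 𝒴 h𝒴 => ?_, fun R v hv => ?_⟩
    · obtain ⟨v, hv, h𝒴v⟩ := h.exists_succ h𝒴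
      exact ⟨_, Set.sep_subset _ _, v, hv, ih h𝒴v.restrict_treeSim fun _ ht => ht.2⟩
    · exact ⟨_, fun s hs => hs.1, ih (h.succ hv).restrict_treeSim fun _ hs => hs.2⟩
theorem exists_isHorn_typeSet_eq_hornEntails {k : ℕ} (𝒞 : Set (TreeType Con Rol k)) :
    ∃ H : ALC Con Rol, H.IsHorn ∧ H.depth ≤ k ∧ H.typeSet k = {u | HornEntails k 𝒞 u} := by
  let P := {S | ∃ K : ALC Con Rol, K.IsHorn ∧ K.depth ≤ k ∧ 𝒞 ⊆ K.typeSet k ∧ K.typeSet k = S}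
  choose! F hF hFd h𝒞F hFS using fun S (hS : S ∈ P) => hS
  refine ⟨ALC.setConj P F, .setConj hF, ALC.depth_setConj_le hFd, Set.ext fun u => ?_⟩
  rw [ALC.mem_typeSet_setConj]
  refine ⟨fun hu K hK hKd h𝒞K => ?_, fun hu S hS => hu _ (hF S hS) (hFd S hS) (h𝒞F S hS)⟩
  have hKP : K.typeSet k ∈ P := ⟨K, hK, hKd, h𝒞K, rfl⟩
  exact hFS _ hKP ▸ hu _ hKP

theorem exists_isHorn_sem_eq_of_preserved (C : ALC Con Rol) {ℓ : ℕ} (hd : C.depth ≤ ℓ) :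
    ∃ H : ALC Con Rol, H.IsHorn ∧ H.depth ≤ ℓ ∧ ∀ {D : Type} (N : Str Con Rol D),
      (∀ X b, X ⊆ C.sem (canonStr Con Rol ℓ) → HornSimL (canonStr Con Rol ℓ) N ℓ X b →
        b ∈ C.sem N) → C.sem N = H.sem N := by
  obtain ⟨H, hH, hHd, hHC⟩ := exists_isHorn_typeSet_eq_hornEntails (C.typeSet ℓ)
  refine ⟨H, hH, hHd, fun N hpres => Set.ext fun b => ?_⟩
  rw [H.mem_sem_iff_treeType_mem_typeSet hHd, hHC]
  refine ⟨fun hb K _ _ hCK => hCK ((C.mem_sem_iff_treeType_mem_typeSet hd N b).1 hb),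
    fun hb => ?_⟩
  let 𝒳 := {t ∈ C.typeSet ℓ | TreeSim ℓ (N.treeType ℓ b) t}
  refine hpres (canonNode ℓ le_rfl '' 𝒳) b (fun _ ⟨t, ht, hx⟩ => hx ▸ ht.1) ?_
  refine hornSimL_of_treeHornSim ?_
  rw [Set.image_image]
  simp only [treeType_canonNode, Set.image_id']
  exact treeHornSim_of_hornEntails (HornEntails.restrict_treeSim hb) fun _ ht => ht.2

end FiniteVocabulary

/-- **Expressive completeness for hornALC-concepts.**
For an ALC-concept `C` of depth `ℓ` over a finite vocabulary, the following are
equivalent (both classically and in the finite-model-theory setting):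
(1) `C` is equivalent to a hornALC-concept; (2) `C` is preserved under Horn simulations;
(3) `C` is preserved under ℓ-Horn simulations; (4) `C` is equivalent to a
hornALC-concept of depth ≤ ℓ. -/
theorem hornALC_expressive_completeness_concepts {Con Rol : Type}
    [Fintype Con] [Fintype Rol] (C : ALC Con Rol) (ℓ : ℕ) (hC : C.depth = ℓ) :
    [ (∃ H : ALC Con Rol, H.IsHorn ∧ ConceptEquiv C H),
      PreservedHorn C,
      PreservedHornL C ℓ,
      (∃ H : ALC Con Rol, H.IsHorn ∧ H.depth ≤ ℓ ∧ ConceptEquiv C H) ].TFAE ∧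
    [ (∃ H : ALC Con Rol, H.IsHorn ∧ ConceptEquivFin C H),
      PreservedHornFin C,
      PreservedHornLFin C ℓ,
      (∃ H : ALC Con Rol, H.IsHorn ∧ H.depth ≤ ℓ ∧ ConceptEquivFin C H) ].TFAE := by
  obtain ⟨H, hH, hHd, hCH⟩ := exists_isHorn_sem_eq_of_preserved C hC.le
  constructor
  · tfae_have 1 → 2 := fun ⟨K, hK, hCK⟩ _ _ _ _ M N _ _ hX hXb =>
      hCK _ N ▸ hK.mem_sem_of_hornSim hXb (hCK _ M ▸ hX)
    tfae_have 2 → 3 := fun h2 _ _ _ _ _ _ _ _ =>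
      mem_sem_of_hornSimL_of_preserved hC.le (h2 _ _ _ _)
    tfae_have 3 → 4 := fun h3 => ⟨H, hH, hHd, fun _ _ N => hCH N (h3 _ _ _ N)⟩
    tfae_have 4 → 1 := fun ⟨K, hK, _, hCK⟩ => ⟨K, hK, hCK⟩
    tfae_finish
  · tfae_have 1 → 2 := fun ⟨K, hK, hCK⟩ _ _ _ _ _ _ M N _ _ hX hXb =>
      hCK _ N ▸ hK.mem_sem_of_hornSim hXb (hCK _ M ▸ hX)
    tfae_have 2 → 3 := fun h2 _ _ _ _ _ _ _ _ _ _ =>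
      mem_sem_of_hornSimL_of_preserved hC.le (h2 _ _ _ _)
    tfae_have 3 → 4 := fun h3 => ⟨H, hH, hHd, fun _ _ _ N => hCH N (h3 _ _ _ N)⟩
    tfae_have 4 → 1 := fun ⟨K, hK, _, hCK⟩ => ⟨K, hK, hCK⟩
    tfae_finish
end

section
/- Every hornALC-concept is equivalent to a p-hornALC-concept, and conversely every p-hornALC-concept is equivalent to a hornALC-concept (where two concepts are equivalent if they have the same extension in every τ-structure). -/
variable {Con Rol D D1 D2 : Type}

/-- The pair `(pl⁺ C, pl⁻ C)` of polarity counts of an ALC-concept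
(`C → D` is treated as `¬C ⊔ D`). -/
def ALC.pl : ALC Con Rol → ℕ × ℕ
  | .top => (0, 0)
  | .bot => (0, 0)
  | .atomic _ => (1, 0)
  | .neg C => ((pl C).2, (pl C).1)
  | .conj C C' => (max (pl C).1 (pl C').1, (pl C).2 + (pl C').2)
  | .disj C C' => ((pl C).1 + (pl C').1, max (pl C).2 (pl C').2)
  | .impl C C' => ((pl C).2 + (pl C').1, max (pl C).1 (pl C').2)
  | .ex _ C => (max 1 (pl C).1, (pl C).2)
  | .all _ C => ((pl C).1, max 1 (pl C).2)

/-- A p-hornALC-concept: an ALC-concept `C` with `pol(C) = pl⁺(C) ≤ 1`. -/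
def ALC.IsPHorn (C : ALC Con Rol) : Prop := (C.pl).1 ≤ 1

section Aux

variable {Con Rol : Type}

/-- negation normal form; `nnf true C ≡ C`, `nnf false C ≡ ¬C`. -/
def ALC.nnf : Bool → ALC Con Rol → ALC Con Rol
  | true, .top => .top
  | false, .top => .bot
  | true, .bot => .bot
  | false, .bot => .top
  | true, .atomic A => .atomic A
  | false, .atomic A => .neg (.atomic A)
  | b, .neg C => ALC.nnf (!b) C
  | true, .conj C C' => .conj (ALC.nnf true C) (ALC.nnf true C')
  | false, .conj C C' => .disj (ALC.nnf false C) (ALC.nnf false C')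
  | true, .disj C C' => .disj (ALC.nnf true C) (ALC.nnf true C')
  | false, .disj C C' => .conj (ALC.nnf false C) (ALC.nnf false C')
  | true, .impl C C' => .disj (ALC.nnf false C) (ALC.nnf true C')
  | false, .impl C C' => .conj (ALC.nnf true C) (ALC.nnf false C')
  | true, .ex R C => .ex R (ALC.nnf true C)
  | false, .ex R C => .all R (ALC.nnf false C)
  | true, .all R C => .all R (ALC.nnf true C)
  | false, .all R C => .ex R (ALC.nnf false C)

inductive ALC.IsNNF : ALC Con Rol → Prop
  | top : IsNNF .top
  | bot : IsNNF .bot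
  | atomic (A : Con) : IsNNF (.atomic A)
  | negAtomic (A : Con) : IsNNF (.neg (.atomic A))
  | conj {C C' : ALC Con Rol} : IsNNF C → IsNNF C' → IsNNF (.conj C C')
  | disj {C C' : ALC Con Rol} : IsNNF C → IsNNF C' → IsNNF (.disj C C')
  | ex (R : Rol) {C : ALC Con Rol} : IsNNF C → IsNNF (.ex R C)
  | all (R : Rol) {C : ALC Con Rol} : IsNNF C → IsNNF (.all R C)

lemma ALC.isNNF_nnf (C : ALC Con Rol) : ∀ b, (ALC.nnf b C).IsNNF := by
  induction C <;> rintro (_|_) <;> simp only [ALC.nnf, Bool.not_false, Bool.not_true] <;>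
    first
      | exact .top
      | exact .bot
      | exact .atomic _
      | exact .negAtomic _
      | apply_assumption
      | exact .conj (by apply_assumption) (by apply_assumption)
      | exact .disj (by apply_assumption) (by apply_assumption)
      | exact .ex _ (by apply_assumption)
      | exact .all _ (by apply_assumption)

lemma ALC.sem_nnf {E : Type} (M : Str Con Rol E) (C : ALC Con Rol) :
    (ALC.nnf true C).sem M = C.sem M ∧ (ALC.nnf false C).sem M = (C.sem M)ᶜ := by
  induction C with
  | top => simp [ALC.nnf, ALC.sem]
  | bot => simp [ALC.nnf, ALC.sem]
  | atomic A => simp [ALC.nnf, ALC.sem]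
  | neg C ih => simpa [ALC.nnf, ALC.sem] using ⟨ih.2, ih.1⟩
  | conj C C' ih ih' =>
      simp [ALC.nnf, ALC.sem, ih.1, ih.2, ih'.1, ih'.2, Set.compl_inter]
  | disj C C' ih ih' =>
      simp [ALC.nnf, ALC.sem, ih.1, ih.2, ih'.1, ih'.2, Set.compl_union]
  | impl C C' ih ih' =>
      simp [ALC.nnf, ALC.sem, ih.1, ih.2, ih'.1, ih'.2, Set.compl_union]
  | ex R C ih =>
      constructor <;> ext a <;> simp [ALC.nnf, ALC.sem, ih.1, ih.2]
  | all R C ih =>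
      constructor <;> ext a <;> simp [ALC.nnf, ALC.sem, ih.1, ih.2]

lemma ALC.pl_nnf (C : ALC Con Rol) :
    (ALC.nnf true C).pl = C.pl ∧ (ALC.nnf false C).pl = ((C.pl).2, (C.pl).1) := by
  induction C with
  | top => simp [ALC.nnf, ALC.pl]
  | bot => simp [ALC.nnf, ALC.pl]
  | atomic A => simp [ALC.nnf, ALC.pl]
  | neg C ih => simpa [ALC.nnf, ALC.pl] using ⟨ih.2, ih.1⟩
  | conj C C' ih ih' => simp [ALC.nnf, ALC.pl, ih.1, ih.2, ih'.1, ih'.2]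
  | disj C C' ih ih' => simp [ALC.nnf, ALC.pl, ih.1, ih.2, ih'.1, ih'.2]
  | impl C C' ih ih' => simp [ALC.nnf, ALC.pl, ih.1, ih.2, ih'.1, ih'.2]
  | ex R C ih => simp [ALC.nnf, ALC.pl, ih.1, ih.2]
  | all R C ih => simp [ALC.nnf, ALC.pl, ih.1, ih.2]

lemma ALC.pl_snd_of_isELU {L : ALC Con Rol} (h : L.IsELU) : (L.pl).2 = 0 := by
  induction h with
  | top => simp [ALC.pl]
  | atomic A => simp [ALC.pl]
  | conj _ _ ih ih' => simp [ALC.pl, ih, ih']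
  | disj _ _ ih ih' => simp [ALC.pl, ih, ih']
  | ex R _ ih => simp [ALC.pl, ih]

lemma ALC.isPHorn_of_isHorn {H : ALC Con Rol} (h : H.IsHorn) : H.IsPHorn := by
  induction h with
  | bot => simp [ALC.IsPHorn, ALC.pl]
  | top => simp [ALC.IsPHorn, ALC.pl]
  | atomic A => simp [ALC.IsPHorn, ALC.pl]
  | conj _ _ ih ih' => simp_all [ALC.IsPHorn, ALC.pl]
  | impl hL _ ih =>
      simp_all [ALC.IsPHorn, ALC.pl, ALC.pl_snd_of_isELU hL]
  | ex R _ ih => simp_all [ALC.IsPHorn, ALC.pl]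
  | all R _ ih => simp_all [ALC.IsPHorn, ALC.pl]

/-- main lemma: NNF concepts with pl⁺ ≤ 1 are Horn-expressible, and those with
pl⁺ = 0 are ⊤ or the complement of an ELU concept. -/
lemma ALC.main {C : ALC Con Rol} (h : C.IsNNF) :
    ((C.pl).1 ≤ 1 → ∃ H : ALC Con Rol, H.IsHorn ∧
        ∀ (E : Type) (M : Str Con Rol E), C.sem M = H.sem M) ∧
    ((C.pl).1 = 0 →
      (∀ (E : Type) (M : Str Con Rol E), C.sem M = Set.univ) ∨
      (∃ L : ALC Con Rol, L.IsELU ∧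
        ∀ (E : Type) (M : Str Con Rol E), C.sem M = (L.sem M)ᶜ)) := by
  induction h with
  | top =>
      refine ⟨fun _ => ⟨.top, .top, fun E M => rfl⟩, fun _ => .inl fun E M => rfl⟩
  | bot =>
      refine ⟨fun _ => ⟨.bot, .bot, fun E M => rfl⟩,
        fun _ => .inr ⟨.top, .top, fun E M => by simp [ALC.sem]⟩⟩
  | atomic A =>
      refine ⟨fun _ => ⟨.atomic A, .atomic A, fun E M => rfl⟩, fun h0 => ?_⟩
      simp [ALC.pl] at h0
  | negAtomic A =>
      exact ⟨fun _ => ⟨.impl (.atomic A) .bot,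
          ALC.IsHorn.impl (ALC.IsELU.atomic A) ALC.IsHorn.bot,
          fun E M => by simp [ALC.sem]⟩,
        fun _ => .inr ⟨.atomic A, ALC.IsELU.atomic A, fun E M => rfl⟩⟩
  | conj hC hC' ih ih' =>
      constructor
      · intro h1
        simp only [ALC.pl, max_le_iff] at h1
        obtain ⟨H, hH, eH⟩ := ih.1 h1.1
        obtain ⟨H', hH', eH'⟩ := ih'.1 h1.2
        exact ⟨.conj H H', .conj hH hH', fun E M => by
          simp [ALC.sem, eH E M, eH' E M]⟩
      · intro h0
        simp only [ALC.pl, Nat.max_eq_zero_iff] at h0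
        rcases ih.2 h0.1 with e | ⟨L, hL, eL⟩
        · rcases ih'.2 h0.2 with e' | ⟨L', hL', eL'⟩
          · exact .inl fun E M => by simp [ALC.sem, e E M, e' E M]
          · exact .inr ⟨L', hL', fun E M => by simp [ALC.sem, e E M, eL' E M]⟩
        · rcases ih'.2 h0.2 with e' | ⟨L', hL', eL'⟩
          · exact .inr ⟨L, hL, fun E M => by simp [ALC.sem, eL E M, e' E M]⟩
          · exact .inr ⟨.disj L L', .disj hL hL', fun E M => by
              simp [ALC.sem, eL E M, eL' E M, Set.compl_union]⟩
  | disj hC hC' ih ih' =>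
      constructor
      · rename_i C1 C2
        intro h1
        simp only [ALC.pl] at h1
        rcases Nat.eq_zero_or_pos C1.pl.1 with h0 | hpos
        · rcases ih.2 h0 with e | ⟨L, hL, eL⟩
          · exact ⟨.top, .top, fun E M => by simp [ALC.sem, e E M]⟩
          · obtain ⟨H', hH', eH'⟩ := ih'.1 (by omega)
            exact ⟨.impl L H', .impl hL hH', fun E M => by
              simp [ALC.sem, eL E M, eH' E M]⟩
        · have h0' : C2.pl.1 = 0 := by omega
          rcases ih'.2 h0' with e' | ⟨L', hL', eL'⟩
          · exact ⟨.top, .top, fun E M => by simp [ALC.sem, e' E M]⟩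
          · obtain ⟨H, hH, eH⟩ := ih.1 (by omega)
            exact ⟨.impl L' H, .impl hL' hH, fun E M => by
              simp [ALC.sem, eL' E M, eH E M, Set.union_comm]⟩
      · intro h0
        simp only [ALC.pl, Nat.add_eq_zero] at h0
        rcases ih.2 h0.1 with e | ⟨L, hL, eL⟩
        · exact .inl fun E M => by simp [ALC.sem, e E M]
        · rcases ih'.2 h0.2 with e' | ⟨L', hL', eL'⟩
          · exact .inl fun E M => by simp [ALC.sem, e' E M]
          · exact .inr ⟨.conj L L', .conj hL hL', fun E M => by
              simp [ALC.sem, eL E M, eL' E M, Set.compl_inter]⟩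
  | ex R hC ih =>
      constructor
      · intro h1
        simp only [ALC.pl, max_le_iff] at h1
        obtain ⟨H, hH, eH⟩ := ih.1 h1.2
        exact ⟨.ex R H, .ex R hH, fun E M => by simp [ALC.sem, eH E M]⟩
      · intro h0
        simp [ALC.pl] at h0
  | all R hC ih =>
      constructor
      · intro h1
        simp only [ALC.pl] at h1
        obtain ⟨H, hH, eH⟩ := ih.1 h1
        exact ⟨.all R H, .all R hH, fun E M => by simp [ALC.sem, eH E M]⟩
      · intro h0
        simp only [ALC.pl] at h0
        rcases ih.2 h0 with e | ⟨L, hL, eL⟩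
        · exact .inl fun E M => by simp [ALC.sem, e E M]
        · refine .inr ⟨.ex R L, .ex R hL, fun E M => ?_⟩
          ext a; simp [ALC.sem, eL E M]

end Aux

/-- Every hornALC-concept is equivalent to a p-hornALC-concept, and vice versa. -/
theorem hornALC_equiv_pHornALC {Con Rol : Type} :
    (∀ H : ALC Con Rol, H.IsHorn → ∃ C : ALC Con Rol, C.IsPHorn ∧ ConceptEquiv H C) ∧
    (∀ C : ALC Con Rol, C.IsPHorn → ∃ H : ALC Con Rol, H.IsHorn ∧ ConceptEquiv C H) := by
  constructor
  · intro H hH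
    exact ⟨H, ALC.isPHorn_of_isHorn hH, fun E _ M => rfl⟩
  · intro C hC
    have hnnf := ALC.isNNF_nnf C true
    have hpl : ((ALC.nnf true C).pl).1 ≤ 1 := by
      rw [(ALC.pl_nnf C).1]; exact hC
    obtain ⟨H, hH, eH⟩ := (ALC.main hnnf).1 hpl
    refine ⟨H, hH, fun E _ M => ?_⟩
    rw [← (ALC.sem_nnf M C).1, eH E M]
end

section
/- Every hornGF-formula φ(x̄) is equivalent to a Horn first-order formula, i.e., there is a Horn formula ψ(x̄) with the same free variables such that for every τ-structure 𝔄 and every assignment of the free variables: 𝔄 ⊨ φ iff 𝔄 ⊨ ψ. -/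
/-- A τ-structure for a vocabulary `Rel` of predicate names of arities `ar`. -/
structure GStr (Rel : Type) (ar : Rel → ℕ) (D : Type) where
  interp : ∀ R : Rel, Set (Fin (ar R) → D)

/-- First-order formulas over the vocabulary `(Rel, ar)` (with equality), using
natural numbers as variables; `ex`/`all` quantify simultaneously over a list of
variables. -/
inductive GFO (Rel : Type) (ar : Rel → ℕ) where
  | top : GFO Rel ar
  | bot : GFO Rel ar
  | eq : ℕ → ℕ → GFO Rel ar
  | rel : (R : Rel) → (Fin (ar R) → ℕ) → GFO Rel ar
  | not : GFO Rel ar → GFO Rel ar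
  | and : GFO Rel ar → GFO Rel ar → GFO Rel ar
  | or : GFO Rel ar → GFO Rel ar → GFO Rel ar
  | imp : GFO Rel ar → GFO Rel ar → GFO Rel ar
  | ex : List ℕ → GFO Rel ar → GFO Rel ar
  | all : List ℕ → GFO Rel ar → GFO Rel ar

variable {Rel : Type} {ar : Rel → ℕ} {D D1 D2 : Type}

/-- Satisfaction of a formula in a structure under a valuation. -/
def GFO.sem (M : GStr Rel ar D) : GFO Rel ar → (ℕ → D) → Prop
  | .top, _ => True
  | .bot, _ => False
  | .eq x y, v => v x = v y
  | .rel R t, v => (fun i => v (t i)) ∈ M.interp R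
  | .not φ, v => ¬ φ.sem M v
  | .and φ ψ, v => φ.sem M v ∧ ψ.sem M v
  | .or φ ψ, v => φ.sem M v ∨ ψ.sem M v
  | .imp φ ψ, v => φ.sem M v → ψ.sem M v
  | .ex ys φ, v => ∃ w : ℕ → D, (∀ n, n ∉ ys → w n = v n) ∧ φ.sem M w
  | .all ys φ, v => ∀ w : ℕ → D, (∀ n, n ∉ ys → w n = v n) → φ.sem M w

/-- The free variables of a formula. -/
def GFO.free : GFO Rel ar → Set ℕ
  | .top | .bot => ∅
  | .eq x y => {x, y}
  | .rel _ t => Set.range t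
  | .not φ => φ.free
  | .and φ ψ | .or φ ψ | .imp φ ψ => φ.free ∪ ψ.free
  | .ex ys φ | .all ys φ => φ.free \ {n | n ∈ ys}

/-- The quantifier (nesting) depth of a formula. -/
def GFO.qdepth : GFO Rel ar → ℕ
  | .top | .bot | .eq _ _ | .rel _ _ => 0
  | .not φ => φ.qdepth
  | .and φ ψ | .or φ ψ | .imp φ ψ => max φ.qdepth ψ.qdepth
  | .ex _ φ | .all _ φ => φ.qdepth + 1

/-- Atomic formulas. -/
inductive GFO.IsAtom : GFO Rel ar → Prop
  | eq (x y : ℕ) : IsAtom (.eq x y)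
  | rel (R : Rel) (t : Fin (ar R) → ℕ) : IsAtom (.rel R t)

/-- The positive existential guarded fragment GF∃: built from atomic formulas using
∧, ∨ and guarded existential quantification `∃ȳ(G(x̄ȳ) ∧ φ(x̄ȳ))`. -/
inductive GFO.IsGFex : GFO Rel ar → Prop
  | atom {φ : GFO Rel ar} : IsAtom φ → IsGFex φ
  | and {φ ψ : GFO Rel ar} : IsGFex φ → IsGFex ψ → IsGFex (.and φ ψ)
  | or {φ ψ : GFO Rel ar} : IsGFex φ → IsGFex ψ → IsGFex (.or φ ψ)
  | ex {G φ : GFO Rel ar} (ys : List ℕ) : IsAtom G → φ.free ⊆ G.free →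
      (∀ y ∈ ys, y ∈ G.free) → IsGFex φ → IsGFex (.ex ys (.and G φ))

/-- hornGF-formulas:
`φ ::= ⊥ | ⊤ | x=y | R(x̄) | φ∧φ' | λ→φ | ∃ȳ(G(x̄ȳ)∧φ) | ∀ȳ(G(x̄ȳ)→φ)`
with `λ` in GF∃ and `G` an atomic formula containing all variables of `x̄ȳ`. -/
inductive GFO.IsHornGF : GFO Rel ar → Prop
  | bot : IsHornGF .bot
  | top : IsHornGF .top
  | eq (x y : ℕ) : IsHornGF (.eq x y)
  | rel (R : Rel) (t : Fin (ar R) → ℕ) : IsHornGF (.rel R t)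
  | and {φ ψ : GFO Rel ar} : IsHornGF φ → IsHornGF ψ → IsHornGF (.and φ ψ)
  | imp {l φ : GFO Rel ar} : IsGFex l → IsHornGF φ → IsHornGF (.imp l φ)
  | ex {G φ : GFO Rel ar} (ys : List ℕ) : IsAtom G → φ.free ⊆ G.free →
      (∀ y ∈ ys, y ∈ G.free) → IsHornGF φ → IsHornGF (.ex ys (.and G φ))
  | all {G φ : GFO Rel ar} (ys : List ℕ) : IsAtom G → φ.free ⊆ G.free →
      (∀ y ∈ ys, y ∈ G.free) → IsHornGF φ → IsHornGF (.all ys (.imp G φ))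

/-- Disjunctions of negations of atoms. -/
inductive GFO.IsNegClause : GFO Rel ar → Prop
  | neg {φ : GFO Rel ar} : IsAtom φ → IsNegClause (.not φ)
  | or {φ ψ : GFO Rel ar} : IsNegClause φ → IsNegClause ψ → IsNegClause (.or φ ψ)

/-- Basic Horn formulas: disjunctions of formulas at most one of which is an atom and
the remaining ones negations of atoms. -/
inductive GFO.IsBasicHorn : GFO Rel ar → Prop
  | pos {φ : GFO Rel ar} : IsAtom φ → IsBasicHorn φ
  | neg {φ : GFO Rel ar} : IsNegClause φ → IsBasicHorn φ
  | orL {φ ψ : GFO Rel ar} : IsNegClause φ → IsBasicHorn ψ → IsBasicHorn (.or φ ψ)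
  | orR {φ ψ : GFO Rel ar} : IsBasicHorn φ → IsNegClause ψ → IsBasicHorn (.or φ ψ)

/-- Horn formulas: constructed from basic Horn formulas using ∧, ∃ and ∀. -/
inductive GFO.IsHornFO : GFO Rel ar → Prop
  | basic {φ : GFO Rel ar} : IsBasicHorn φ → IsHornFO φ
  | and {φ ψ : GFO Rel ar} : IsHornFO φ → IsHornFO ψ → IsHornFO (.and φ ψ)
  | ex (ys : List ℕ) {φ : GFO Rel ar} : IsHornFO φ → IsHornFO (.ex ys φ)
  | all (ys : List ℕ) {φ : GFO Rel ar} : IsHornFO φ → IsHornFO (.all ys φ)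

/-!
Up to equivalence with the same free variables, Horn formulas are closed under `∧`, `∃`, `∀` and
under implications `λ → ψ` whose premise `λ` is positive existential (built from atoms by `∧`, `∨`
and `∃`); every clause of hornGF is one of these. For an atomic premise `A`, push `A →` into the
Horn formula: `A → β ≡ ¬A ∨ β` for basic Horn `β`, `A → (ψ₁ ∧ ψ₂) ≡ (A → ψ₁) ∧ (A → ψ₂)`, and
`A → Qȳ ψ ≡ Qȳ (A → ψ)` once `ȳ` has been renamed away from the variables of `A`. A positive
existential premise is then taken apart by `(λ₁ ∧ λ₂) → ψ ≡ λ₁ → (λ₂ → ψ)`,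
`(λ₁ ∨ λ₂) → ψ ≡ (λ₁ → ψ) ∧ (λ₂ → ψ)` and `(∃ȳ λ) → ψ ≡ ∀ȳ (λ → ψ)`, again after renaming `ȳ`.
Since renaming keeps the size of a formula but not its subformulas, both inductions are on size.
-/

theorem List.mem_map_equiv {α β : Type*} (e : α ≃ β) {l : List α} {b : β} :
    b ∈ l.map e ↔ e.symm b ∈ l := by
  rw [List.mem_map]
  exact ⟨by rintro ⟨a, ha, rfl⟩; simpa, fun h => ⟨_, h, e.apply_symm_apply b⟩⟩

theorem union_sdiff_of_forall_notMem {ys : List ℕ} {s t : Set ℕ} (h : ∀ y ∈ ys, y ∉ s) :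
    s ∪ t \ {n | n ∈ ys} = (s ∪ t) \ {n | n ∈ ys} := by
  have hs : Disjoint s {n | n ∈ ys} := Set.disjoint_left.mpr fun n hs hys => h n hys hs
  rw [Set.union_sdiff_distrib, hs.sdiff_eq_left]

theorem exists_perm_fixing_avoiding {F S : Set ℕ} (hF : F.Finite) (hS : S.Finite)
    {ys : List ℕ} (hys : ∀ y ∈ ys, y ∉ F) :
    ∃ σ : Equiv.Perm ℕ, (∀ n ∈ F, σ n = n) ∧ ∀ y ∈ ys, σ y ∉ S := by
  classical
  obtain ⟨N, hN⟩ : ∃ N, ∀ n ∈ F ∪ S ∪ {n | n ∈ ys}, n < N :=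
    let ⟨M, hM⟩ := ((hF.union hS).union ys.finite_toSet).bddAbove
    ⟨M + 1, fun _ hn => Nat.lt_succ_of_le (hM hn)⟩
  set f : ℕ → ℕ := fun n => if n ∈ ys then n + N else if N ≤ n ∧ n - N ∈ ys then n - N else n
  have hf : Function.Involutive f := by
    intro n
    by_cases hn : n ∈ ys
    · have : n + N ∉ ys := fun h => by have := hN _ (.inr h); omega
      simp [f, hn, this]
    · by_cases hn' : N ≤ n ∧ n - N ∈ ys
      · simp [f, hn, hn', Nat.sub_add_cancel hn'.1]
      · have hfn : f n = n := by simp only [f, if_neg hn, if_neg hn']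
        rw [hfn, hfn]
  refine ⟨hf.toPerm, fun n hn => ?_, fun y hy hyS => ?_⟩
  · have hn' : ¬ (N ≤ n ∧ n - N ∈ ys) := fun h => by have := hN n (.inl (.inl hn)); omega
    simp only [hf.coe_toPerm, f, if_neg (hys n · hn), if_neg hn']
  · have := hN _ (.inl (.inr hyS))
    simp only [hf.coe_toPerm, f, if_pos hy] at this
    omega

namespace GFO

/-- Bound variables are renamed along with the free ones, so no variable is ever captured. -/
def rename (σ : Equiv.Perm ℕ) : GFO Rel ar → GFO Rel ar
  | .top => .top
  | .bot => .bot
  | .eq x y => .eq (σ x) (σ y)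
  | .rel R t => .rel R (σ ∘ t)
  | .not φ => .not (φ.rename σ)
  | .and φ ψ => .and (φ.rename σ) (ψ.rename σ)
  | .or φ ψ => .or (φ.rename σ) (ψ.rename σ)
  | .imp φ ψ => .imp (φ.rename σ) (ψ.rename σ)
  | .ex ys φ => .ex (ys.map σ) (φ.rename σ)
  | .all ys φ => .all (ys.map σ) (φ.rename σ)

def size : GFO Rel ar → ℕ
  | .top | .bot | .eq _ _ | .rel _ _ => 0
  | .not φ => φ.size + 1
  | .and φ ψ | .or φ ψ | .imp φ ψ => φ.size + ψ.size + 1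
  | .ex _ φ | .all _ φ => φ.size + 1

@[simp]
theorem size_rename (σ : Equiv.Perm ℕ) (φ : GFO Rel ar) : (φ.rename σ).size = φ.size := by
  induction φ <;> simp [rename, size, *]

theorem free_finite (φ : GFO Rel ar) : φ.free.Finite := by
  induction φ <;> simp_all [free, Set.finite_range, Set.Finite.sdiff]

theorem free_rename (σ : Equiv.Perm ℕ) (φ : GFO Rel ar) :
    (φ.rename σ).free = σ '' φ.free := by
  induction φ with
  | top | bot => simp [rename, free]
  | eq x y => simp [rename, free, Set.image_pair]
  | rel R t => simp [rename, free, Set.range_comp]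
  | not φ ih => simpa [rename, free] using ih
  | and φ ψ ih₁ ih₂ | or φ ψ ih₁ ih₂ | imp φ ψ ih₁ ih₂ =>
    simp [rename, free, ih₁, ih₂, Set.image_union]
  | ex ys φ ih | all ys φ ih =>
    rw [rename, free, free, ih, Set.image_sdiff σ.injective]
    congr 1
    ext n
    simp [List.mem_map_equiv]

theorem sem_rename (M : GStr Rel ar D) (σ : Equiv.Perm ℕ) (φ : GFO Rel ar) (v : ℕ → D) :
    (φ.rename σ).sem M v ↔ φ.sem M (v ∘ σ) := by
  induction φ generalizing v with
  | top | bot | eq | rel => rfl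
  | not φ ih => exact not_congr (ih v)
  | and φ ψ ih₁ ih₂ => exact and_congr (ih₁ v) (ih₂ v)
  | or φ ψ ih₁ ih₂ => exact or_congr (ih₁ v) (ih₂ v)
  | imp φ ψ ih₁ ih₂ => exact imp_congr (ih₁ v) (ih₂ v)
  | ex ys φ ih =>
    simp only [rename, sem, ih]
    constructor
    · rintro ⟨w, hw, hφ⟩
      exact ⟨w ∘ σ, fun n hn => hw (σ n) (by simpa [List.mem_map_equiv]), hφ⟩
    · rintro ⟨u, hu, hφ⟩
      refine ⟨u ∘ σ.symm, fun n hn => ?_, by simpa [Function.comp_def]⟩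
      simpa using hu (σ.symm n) ((List.mem_map_equiv σ).not.mp hn)
  | all ys φ ih =>
    simp only [rename, sem, ih]
    constructor
    · intro H u hu
      have hu' : ∀ n ∉ ys.map σ, (u ∘ σ.symm) n = v n := fun n hn => by
        simpa using hu (σ.symm n) ((List.mem_map_equiv σ).not.mp hn)
      simpa [Function.comp_def] using H (u ∘ σ.symm) hu'
    · exact fun H w hw => H (w ∘ σ) fun n hn => hw (σ n) (by simpa [List.mem_map_equiv])

theorem exists_agreeing_valuation {ys : List ℕ} {F : Set ℕ} {v v' w : ℕ → D}
    (h : Set.EqOn v v' (F \ {n | n ∈ ys})) (hw : ∀ n ∉ ys, w n = v n) :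
    ∃ w' : ℕ → D, (∀ n ∉ ys, w' n = v' n) ∧ Set.EqOn w w' F := by
  classical
  refine ⟨fun n => if n ∈ ys then w n else v' n, fun n hn => if_neg hn, fun n hn => ?_⟩
  by_cases hn' : n ∈ ys
  · exact (if_pos hn').symm
  · simpa [hn', hw n hn'] using h ⟨hn, hn'⟩

theorem sem_congr (M : GStr Rel ar D) {φ : GFO Rel ar} {v v' : ℕ → D}
    (h : Set.EqOn v v' φ.free) : φ.sem M v ↔ φ.sem M v' := by
  induction φ generalizing v v' with
  | top | bot => rfl
  | eq x y => simp only [sem, h (Set.mem_insert x {y}), h (Set.mem_insert_of_mem x rfl)]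
  | rel R t => simp only [sem, funext fun i => h ⟨i, rfl⟩]
  | not φ ih => exact not_congr (ih h)
  | and φ ψ ih₁ ih₂ =>
    exact and_congr (ih₁ (h.mono Set.subset_union_left)) (ih₂ (h.mono Set.subset_union_right))
  | or φ ψ ih₁ ih₂ =>
    exact or_congr (ih₁ (h.mono Set.subset_union_left)) (ih₂ (h.mono Set.subset_union_right))
  | imp φ ψ ih₁ ih₂ =>
    exact imp_congr (ih₁ (h.mono Set.subset_union_left)) (ih₂ (h.mono Set.subset_union_right))
  | ex ys φ ih =>
    constructor
    · rintro ⟨w, hw, hφ⟩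
      obtain ⟨w', hw', hww'⟩ := exists_agreeing_valuation h hw
      exact ⟨w', hw', (ih hww').1 hφ⟩
    · rintro ⟨w', hw', hφ⟩
      obtain ⟨w, hw, hw'w⟩ := exists_agreeing_valuation h.symm hw'
      exact ⟨w, hw, (ih hw'w).1 hφ⟩
  | all ys φ ih =>
    constructor
    · intro H w' hw'
      obtain ⟨w, hw, hw'w⟩ := exists_agreeing_valuation h.symm hw'
      exact (ih hw'w).2 (H w hw)
    · intro H w hw
      obtain ⟨w', hw', hww'⟩ := exists_agreeing_valuation h hw
      exact (ih hww').2 (H w' hw')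

theorem sem_congr_of_agree_off (M : GStr Rel ar D) {φ : GFO Rel ar} {ys : List ℕ}
    (hys : ∀ y ∈ ys, y ∉ φ.free) {v w : ℕ → D} (hw : ∀ n ∉ ys, w n = v n) :
    φ.sem M w ↔ φ.sem M v :=
  sem_congr M fun n hn => hw n fun hn' => hys n hn' hn

def Equivalent (φ ψ : GFO Rel ar) : Prop :=
  φ.free = ψ.free ∧ ∀ (D : Type) (M : GStr Rel ar D) (v : ℕ → D), φ.sem M v ↔ ψ.sem M v

namespace Equivalent

variable {φ φ' ψ ψ' χ : GFO Rel ar}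

theorem refl (φ : GFO Rel ar) : Equivalent φ φ := ⟨rfl, fun _ _ _ => Iff.rfl⟩

theorem symm (h : Equivalent φ ψ) : Equivalent ψ φ :=
  ⟨h.1.symm, fun D M v => (h.2 D M v).symm⟩

theorem trans (h₁ : Equivalent φ ψ) (h₂ : Equivalent ψ χ) : Equivalent φ χ :=
  ⟨h₁.1.trans h₂.1, fun D M v => (h₁.2 D M v).trans (h₂.2 D M v)⟩

theorem and (h : Equivalent φ φ') (h' : Equivalent ψ ψ') :
    Equivalent (φ.and ψ) (φ'.and ψ') :=
  ⟨congrArg₂ (· ∪ ·) h.1 h'.1, fun D M v => and_congr (h.2 D M v) (h'.2 D M v)⟩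

theorem imp (h : Equivalent φ φ') (h' : Equivalent ψ ψ') :
    Equivalent (φ.imp ψ) (φ'.imp ψ') :=
  ⟨congrArg₂ (· ∪ ·) h.1 h'.1, fun D M v => imp_congr (h.2 D M v) (h'.2 D M v)⟩

theorem ex (ys : List ℕ) (h : Equivalent φ ψ) : Equivalent (.ex ys φ) (.ex ys ψ) :=
  ⟨congrArg (· \ _) h.1, fun D M _ => exists_congr fun w => and_congr_right' (h.2 D M w)⟩

theorem all (ys : List ℕ) (h : Equivalent φ ψ) : Equivalent (.all ys φ) (.all ys ψ) :=
  ⟨congrArg (· \ _) h.1, fun D M _ => forall_congr' fun w => imp_congr_right fun _ => h.2 D M w⟩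

end Equivalent

theorem rename_equivalent_of_eqOn {σ : Equiv.Perm ℕ} {φ : GFO Rel ar}
    (h : Set.EqOn σ id φ.free) : Equivalent (φ.rename σ) φ :=
  ⟨(free_rename σ φ).trans h.image_eq_self, fun _ M v =>
    (sem_rename M σ φ v).trans (sem_congr M fun _ hn => congrArg v (h hn))⟩

theorem exists_rename_bound_avoiding (ys : List ℕ) (φ : GFO Rel ar) {S : Set ℕ}
    (hS : S.Finite) : ∃ σ : Equiv.Perm ℕ,
      Equivalent (.ex ys φ) (.ex (ys.map σ) (φ.rename σ)) ∧
      Equivalent (.all ys φ) (.all (ys.map σ) (φ.rename σ)) ∧ ∀ y ∈ ys.map σ, y ∉ S := by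
  obtain ⟨σ, hfix, havoid⟩ := exists_perm_fixing_avoiding (F := φ.free \ {n | n ∈ ys})
    φ.free_finite.sdiff hS fun y hy h => h.2 hy
  refine ⟨σ, (rename_equivalent_of_eqOn (φ := .ex ys φ) hfix).symm,
    (rename_equivalent_of_eqOn (φ := .all ys φ) hfix).symm, ?_⟩
  simpa using havoid

section Prenex

variable {A l l₁ l₂ ψ ψ₁ ψ₂ : GFO Rel ar} {ys : List ℕ}

theorem imp_equivalent_or_not : Equivalent (A.imp ψ) (.or (.not A) ψ) :=
  ⟨rfl, fun _ _ _ => imp_iff_not_or⟩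

theorem imp_and_equivalent : Equivalent (A.imp (ψ₁.and ψ₂)) ((A.imp ψ₁).and (A.imp ψ₂)) :=
  ⟨Set.union_union_distrib_left _ _ _, fun _ _ _ => imp_and⟩

theorem and_imp_equivalent : Equivalent ((l₁.and l₂).imp ψ) (l₁.imp (l₂.imp ψ)) :=
  ⟨Set.union_assoc _ _ _, fun _ _ _ => and_imp⟩

theorem or_imp_equivalent : Equivalent ((l₁.or l₂).imp ψ) ((l₁.imp ψ).and (l₂.imp ψ)) :=
  ⟨Set.union_union_distrib_right _ _ _, fun _ _ _ => or_imp⟩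

theorem imp_ex_equivalent (h : ∀ y ∈ ys, y ∉ A.free) :
    Equivalent (A.imp (.ex ys ψ)) (.ex ys (A.imp ψ)) := by
  refine ⟨union_sdiff_of_forall_notMem h, fun _ M v => ⟨fun H => ?_, ?_⟩⟩
  · by_cases hA : A.sem M v
    · obtain ⟨w, hw, hψ⟩ := H hA
      exact ⟨w, hw, fun _ => hψ⟩
    · exact ⟨v, fun _ _ => rfl, fun hA' => absurd hA' hA⟩
  · rintro ⟨w, hw, H⟩ hA
    exact ⟨w, hw, H ((sem_congr_of_agree_off M h hw).2 hA)⟩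

theorem imp_all_equivalent (h : ∀ y ∈ ys, y ∉ A.free) :
    Equivalent (A.imp (.all ys ψ)) (.all ys (A.imp ψ)) :=
  ⟨union_sdiff_of_forall_notMem h, fun _ M _ =>
    ⟨fun H w hw hA => H ((sem_congr_of_agree_off M h hw).1 hA) w hw,
     fun H hA w hw => H w hw ((sem_congr_of_agree_off M h hw).2 hA)⟩⟩

theorem ex_imp_equivalent (h : ∀ y ∈ ys, y ∉ ψ.free) :
    Equivalent ((GFO.ex ys l).imp ψ) (.all ys (l.imp ψ)) := by
  refine ⟨?_, fun _ M v => ⟨fun H w hw hl => ?_, fun H ⟨w, hw, hl⟩ => ?_⟩⟩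
  · show l.free \ _ ∪ ψ.free = (l.free ∪ ψ.free) \ _
    rw [Set.union_comm, union_sdiff_of_forall_notMem h, Set.union_comm]
  · exact (sem_congr_of_agree_off M h hw).2 (H ⟨w, hw, hl⟩)
  · exact (sem_congr_of_agree_off M h hw).1 (H w hw hl)

end Prenex

inductive IsPosEx : GFO Rel ar → Prop
  | atom {φ : GFO Rel ar} : IsAtom φ → IsPosEx φ
  | and {φ ψ : GFO Rel ar} : IsPosEx φ → IsPosEx ψ → IsPosEx (.and φ ψ)
  | or {φ ψ : GFO Rel ar} : IsPosEx φ → IsPosEx ψ → IsPosEx (.or φ ψ)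
  | ex (ys : List ℕ) {φ : GFO Rel ar} : IsPosEx φ → IsPosEx (.ex ys φ)

theorem IsGFex.isPosEx {φ : GFO Rel ar} (h : φ.IsGFex) : φ.IsPosEx := by
  induction h with
  | atom h => exact .atom h
  | and _ _ ih₁ ih₂ => exact .and ih₁ ih₂
  | or _ _ ih₁ ih₂ => exact .or ih₁ ih₂
  | ex ys hG _ _ _ ih => exact .ex ys (.and (.atom hG) ih)

section Rename

variable {φ : GFO Rel ar} (σ : Equiv.Perm ℕ)

theorem IsAtom.rename (h : φ.IsAtom) : (φ.rename σ).IsAtom := by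
  cases h <;> constructor

theorem IsNegClause.rename (h : φ.IsNegClause) : (φ.rename σ).IsNegClause := by
  induction h with
  | neg h => exact .neg (h.rename σ)
  | or _ _ ih₁ ih₂ => exact .or ih₁ ih₂

theorem IsBasicHorn.rename (h : φ.IsBasicHorn) : (φ.rename σ).IsBasicHorn := by
  induction h with
  | pos h => exact .pos (h.rename σ)
  | neg h => exact .neg (h.rename σ)
  | orL h _ ih => exact .orL (h.rename σ) ih
  | orR _ h ih => exact .orR ih (h.rename σ)

theorem IsHornFO.rename (h : φ.IsHornFO) : (φ.rename σ).IsHornFO := by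
  induction h with
  | basic h => exact .basic (h.rename σ)
  | and _ _ ih₁ ih₂ => exact .and ih₁ ih₂
  | ex ys _ ih => exact .ex _ ih
  | all ys _ ih => exact .all _ ih

theorem IsPosEx.rename (h : φ.IsPosEx) : (φ.rename σ).IsPosEx := by
  induction h with
  | atom h => exact .atom (h.rename σ)
  | and _ _ ih₁ ih₂ => exact .and ih₁ ih₂
  | or _ _ ih₁ ih₂ => exact .or ih₁ ih₂
  | ex ys _ ih => exact .ex _ ih

end Rename

def HornDefinable (φ : GFO Rel ar) : Prop :=
  ∃ ψ : GFO Rel ar, ψ.IsHornFO ∧ Equivalent φ ψ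

namespace HornDefinable

variable {φ ψ : GFO Rel ar}

theorem of_equivalent (hψ : HornDefinable ψ) (h : Equivalent φ ψ) : HornDefinable φ :=
  let ⟨χ, hχ, hψχ⟩ := hψ
  ⟨χ, hχ, h.trans hψχ⟩

theorem atom (h : φ.IsAtom) : HornDefinable φ := ⟨φ, .basic (.pos h), .refl φ⟩

theorem top : HornDefinable (.top : GFO Rel ar) :=
  ⟨.all [0] (.eq 0 0), .all [0] (.basic (.pos (.eq 0 0))),
    by ext; simp [free], fun _ _ _ => ⟨fun _ _ _ => rfl, fun _ => trivial⟩⟩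

theorem bot : HornDefinable (.bot : GFO Rel ar) :=
  ⟨.all [0] (.not (.eq 0 0)), .all [0] (.basic (.neg (.neg (.eq 0 0)))),
    by ext; simp [free], fun _ _ v => ⟨False.elim, fun H => H v (fun _ _ => rfl) rfl⟩⟩

theorem and (hφ : HornDefinable φ) (hψ : HornDefinable ψ) : HornDefinable (φ.and ψ) :=
  let ⟨φ', hφ', h⟩ := hφ
  let ⟨ψ', hψ', h'⟩ := hψ
  ⟨φ'.and ψ', .and hφ' hψ', h.and h'⟩

theorem ex (ys : List ℕ) (hφ : HornDefinable φ) : HornDefinable (.ex ys φ) :=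
  let ⟨φ', hφ', h⟩ := hφ
  ⟨.ex ys φ', .ex ys hφ', h.ex ys⟩

theorem all (ys : List ℕ) (hφ : HornDefinable φ) : HornDefinable (.all ys φ) :=
  let ⟨φ', hφ', h⟩ := hφ
  ⟨.all ys φ', .all ys hφ', h.all ys⟩

theorem imp_atom {A : GFO Rel ar} (hA : A.IsAtom) :
    ∀ {ψ : GFO Rel ar}, ψ.IsHornFO → HornDefinable (A.imp ψ)
  | _, .basic hb => ⟨_, .basic (.orL (.neg hA) hb), imp_equivalent_or_not⟩
  | _, .and h₁ h₂ => ((imp_atom hA h₁).and (imp_atom hA h₂)).of_equivalent imp_and_equivalent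
  | _, .ex ys (φ := ψ) h => by
    obtain ⟨σ, hσ, -, hfresh⟩ := exists_rename_bound_avoiding ys ψ A.free_finite
    exact ((imp_atom hA (h.rename σ)).ex _).of_equivalent
      (((Equivalent.refl A).imp hσ).trans (imp_ex_equivalent hfresh))
  | _, .all ys (φ := ψ) h => by
    obtain ⟨σ, -, hσ, hfresh⟩ := exists_rename_bound_avoiding ys ψ A.free_finite
    exact ((imp_atom hA (h.rename σ)).all _).of_equivalent
      (((Equivalent.refl A).imp hσ).trans (imp_all_equivalent hfresh))
termination_by ψ => ψ.size
decreasing_by all_goals simp [size]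

theorem imp_of_isPosEx {ψ : GFO Rel ar} (hψ : HornDefinable ψ) :
    ∀ {l : GFO Rel ar}, l.IsPosEx → HornDefinable (l.imp ψ)
  | _, .atom hA =>
    let ⟨ψ', hψ', h⟩ := hψ
    (imp_atom hA hψ').of_equivalent ((Equivalent.refl _).imp h)
  | _, .and h₁ h₂ => ((hψ.imp_of_isPosEx h₂).imp_of_isPosEx h₁).of_equivalent and_imp_equivalent
  | _, .or h₁ h₂ =>
    ((hψ.imp_of_isPosEx h₁).and (hψ.imp_of_isPosEx h₂)).of_equivalent or_imp_equivalent
  | _, .ex ys (φ := l) h => by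
    obtain ⟨σ, hσ, -, hfresh⟩ := exists_rename_bound_avoiding ys l ψ.free_finite
    exact ((hψ.imp_of_isPosEx (h.rename σ)).all _).of_equivalent
      ((hσ.imp (.refl ψ)).trans (ex_imp_equivalent hfresh))
termination_by l => l.size
decreasing_by all_goals simp [size]

end HornDefinable

end GFO

/-- Every hornGF-formula `φ(x̄)` is equivalent to a Horn first-order formula with the
same free variables. -/
theorem hornGF_equiv_hornFO {Rel : Type} {ar : Rel → ℕ}
    (φ : GFO Rel ar) (h : φ.IsHornGF) :
    ∃ ψ : GFO Rel ar, ψ.IsHornFO ∧ ψ.free = φ.free ∧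
      ∀ (D : Type) [Nonempty D] (M : GStr Rel ar D) (v : ℕ → D),
        φ.sem M v ↔ ψ.sem M v := by
  suffices hφ : φ.HornDefinable by
    obtain ⟨ψ, hψ, hfree, hsem⟩ := hφ
    exact ⟨ψ, hψ, hfree.symm, fun D _ => hsem D⟩
  induction h with
  | bot => exact .bot
  | top => exact .top
  | eq x y => exact .atom (.eq x y)
  | rel R t => exact .atom (.rel R t)
  | and _ _ ih₁ ih₂ => exact ih₁.and ih₂
  | imp hl _ ih => exact ih.imp_of_isPosEx hl.isPosEx
  | ex ys hG _ _ _ ih => exact ((GFO.HornDefinable.atom hG).and ih).ex ys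
  | all ys hG _ _ _ ih => exact (ih.imp_of_isPosEx (.atom hG)).all ys
end
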